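/- arXiv:1508.05487 — 6 statements merged into one kernel-verified Lean document; each statement's English description precedes it below -/
import Mathlib

section
/- For every odd integer n ≥ 9, the cycle C_n is normal. -/
/-- A graph is normal: coverings by cliques and independent sets, pairwise intersecting. -/
def IsNormal {V : Type*} (G : SimpleGraph V) : Prop :=
  ∃ 𝔸 𝕊 : Set (Set V),
    (∀ c ∈ 𝔸, G.IsClique c) ∧
    (∀ s ∈ 𝕊, ∀ x ∈ s, ∀ y ∈ s, x ≠ y → ¬ G.Adj x y) ∧
    ⋃₀ 𝔸 = Set.univ ∧ ⋃₀ 𝕊 = Set.univ ∧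
    ∀ c ∈ 𝔸, ∀ s ∈ 𝕊, (c ∩ s).Nonempty

private lemma cycleGraph_adj_val (m : ℕ) (x y : Fin (m + 9)) :
    (SimpleGraph.cycleGraph (m + 9)).Adj x y ↔
      (x.val + 1 = y.val ∨ y.val + 1 = x.val ∨
        (x.val = 0 ∧ y.val + 1 = m + 9) ∨ (y.val = 0 ∧ x.val + 1 = m + 9)) := by
  have key : ∀ a b : ℕ, a < m + 9 → b < m + 9 →
      ((m + 9 - b + a) % (m + 9) = 1 ↔ (a = b + 1 ∨ (a = 0 ∧ b + 1 = m + 9))) := by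
    intro a b ha hb
    rcases le_or_gt (m + 9) (m + 9 - b + a) with h | h
    · rw [Nat.mod_eq_sub_mod h, Nat.mod_eq_of_lt (by omega)]; omega
    · rw [Nat.mod_eq_of_lt h]; omega
  rw [SimpleGraph.cycleGraph_adj']
  simp only [Fin.sub_def]
  rw [key _ _ x.isLt y.isLt, key _ _ y.isLt x.isLt]
  omega

/-- For every odd integer `n ≥ 9`, the cycle `C_n` is normal. -/
theorem cycleGraph_odd_ge_nine_isNormal (n : ℕ) (hn : 9 ≤ n) (hodd : Odd n) :
    IsNormal (SimpleGraph.cycleGraph n) := by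
  obtain ⟨m, rfl⟩ : ∃ m, n = m + 9 := ⟨n - 9, by omega⟩
  have hm : (m + 9) % 2 = 1 := Nat.odd_iff.mp hodd
  -- the clique (edge) family
  set P : ℕ → Prop := fun j =>
    j = 0 ∨ j = 1 ∨ j = 3 ∨ j = 4 ∨ j = 6 ∨ j = 7 ∨ (9 ≤ j ∧ j % 2 = 1) with hP
  set 𝔸 : Set (Set (Fin (m + 9))) := {c | ∃ j : Fin (m + 9), P j.val ∧ c = {j, j + 1}} with hA𝔸
  -- the three independent sets
  set A : Set (Fin (m + 9)) := {v | v.val = 0 ∨ v.val = 2 ∨ v.val = 4 ∨ v.val = 7 ∨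
    (9 ≤ v.val ∧ v.val % 2 = 1)} with hA
  set B : Set (Fin (m + 9)) := {v | v.val = 1 ∨ v.val = 3 ∨ v.val = 5 ∨ v.val = 7 ∨
    (10 ≤ v.val ∧ v.val % 2 = 0)} with hB
  set C : Set (Fin (m + 9)) := {v | v.val = 1 ∨ v.val = 4 ∨ v.val = 6 ∨ v.val = 8 ∨
    (10 ≤ v.val ∧ v.val % 2 = 0)} with hC
  -- helper: successor value
  have hsucc : ∀ j : Fin (m + 9), j.val + 1 < m + 9 → (j + 1).val = j.val + 1 := by
    intro j hj
    have h1 : (1 : Fin (m + 9)).val = 1 := rfl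
    simp [Fin.add_def, h1, Nat.mod_eq_of_lt hj]
  refine ⟨𝔸, {A, B, C}, ?_, ?_, ?_, ?_, ?_⟩
  · -- cliques
    rintro c ⟨j, hj, rfl⟩
    rw [SimpleGraph.isClique_pair]
    intro _
    have hjlt : j.val + 1 < m + 9 := by have := j.isLt; omega
    rw [cycleGraph_adj_val]
    left
    rw [hsucc j hjlt]
  · -- independent sets
    intro s hs x hx y hy hne hadj
    have hvne : x.val ≠ y.val := fun h => hne (Fin.ext h)
    rw [cycleGraph_adj_val] at hadj
    rcases hs with rfl | rfl | rfl <;>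
      · simp only [hA, hB, hC, Set.mem_setOf_eq] at hx hy
        omega
  · -- cliques cover
    apply Set.eq_univ_iff_forall.mpr
    intro v
    rw [Set.mem_sUnion]
    by_cases hv : P v.val
    · exact ⟨{v, v + 1}, ⟨v, hv, rfl⟩, Or.inl rfl⟩
    · have hv1 : 1 ≤ v.val ∧ P (v.val - 1) := by
        have := v.isLt
        simp only [hP] at hv ⊢
        omega
      have hlt : v.val - 1 < m + 9 := by have := v.isLt; omega
      refine ⟨{⟨v.val - 1, hlt⟩, ⟨v.val - 1, hlt⟩ + 1}, ⟨⟨v.val - 1, hlt⟩, hv1.2, rfl⟩, Or.inr ?_⟩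
      have h1v : 1 ≤ v.val := hv1.1
      have : (⟨v.val - 1, hlt⟩ + 1 : Fin (m + 9)) = v := by
        apply Fin.ext
        rw [hsucc ⟨v.val - 1, hlt⟩ (by show v.val - 1 + 1 < m + 9; have := v.isLt; omega)]
        show v.val - 1 + 1 = v.val
        omega
      rw [this]
      rfl
  · -- independent sets cover
    apply Set.eq_univ_iff_forall.mpr
    intro v
    rw [Set.mem_sUnion]
    have hlt := v.isLt
    by_cases h1 : v ∈ A
    · exact ⟨A, Or.inl rfl, h1⟩
    by_cases h2 : v ∈ B
    · exact ⟨B, Or.inr (Or.inl rfl), h2⟩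
    refine ⟨C, Or.inr (Or.inr rfl), ?_⟩
    simp only [hA, hB, hC, Set.mem_setOf_eq] at h1 h2 ⊢
    omega
  · -- intersections
    rintro c ⟨j, hj, rfl⟩ s hs
    have hjlt : j.val + 1 < m + 9 := by
      have := j.isLt
      simp only [hP] at hj
      omega
    have hv := hsucc j hjlt
    rcases hs with rfl | rfl | rfl
    · have key : (j.val = 0 ∨ j.val = 2 ∨ j.val = 4 ∨ j.val = 7 ∨ (9 ≤ j.val ∧ j.val % 2 = 1)) ∨
          ((j + 1).val = 0 ∨ (j + 1).val = 2 ∨ (j + 1).val = 4 ∨ (j + 1).val = 7 ∨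
            (9 ≤ (j + 1).val ∧ (j + 1).val % 2 = 1)) := by
        rw [hv]; simp only [hP] at hj; omega
      rcases key with h | h
      · exact ⟨j, Or.inl rfl, h⟩
      · exact ⟨j + 1, Or.inr rfl, h⟩
    · have key : (j.val = 1 ∨ j.val = 3 ∨ j.val = 5 ∨ j.val = 7 ∨ (10 ≤ j.val ∧ j.val % 2 = 0)) ∨
          ((j + 1).val = 1 ∨ (j + 1).val = 3 ∨ (j + 1).val = 5 ∨ (j + 1).val = 7 ∨
            (10 ≤ (j + 1).val ∧ (j + 1).val % 2 = 0)) := by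
        rw [hv]; simp only [hP] at hj; omega
      rcases key with h | h
      · exact ⟨j, Or.inl rfl, h⟩
      · exact ⟨j + 1, Or.inr rfl, h⟩
    · have key : (j.val = 1 ∨ j.val = 4 ∨ j.val = 6 ∨ j.val = 8 ∨ (10 ≤ j.val ∧ j.val % 2 = 0)) ∨
          ((j + 1).val = 1 ∨ (j + 1).val = 4 ∨ (j + 1).val = 6 ∨ (j + 1).val = 8 ∨
            (10 ≤ (j + 1).val ∧ (j + 1).val % 2 = 0)) := by
        rw [hv]; simp only [hP] at hj; omega
      rcases key with h | h
      · exact ⟨j, Or.inl rfl, h⟩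
      · exact ⟨j + 1, Or.inr rfl, h⟩
end

section
/- If G is a normal triangle-free graph, then G admits a star covering (𝔸, 𝕊) in which the spanning forest of stars E[𝔸] contains at most α(G) stars, where α(G) is the independence number of G. -/
/-- Adjacency in the edge set `E[𝔸]` of a covering by `K₁`s and `K₂`s. -/
def CAdj {V : Type*} (𝔸 : Set (Set V)) (u v : V) : Prop :=
  u ≠ v ∧ ({u, v} : Set V) ∈ 𝔸

/-- `(𝔸, 𝕊)` is a star covering of `G`: every member of `𝔸` induces a `K₂` or `K₁`
(no `K₁` inside a `K₂`), the edges of `𝔸` form a spanning vertex-disjoint union of stars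
(every edge has an endpoint of degree one), every member of `𝕊` is independent, both
families cover `V`, and every clique meets every independent set. -/
def StarCovering {V : Type*} (G : SimpleGraph V) (𝔸 𝕊 : Set (Set V)) : Prop :=
  (∀ c ∈ 𝔸, G.IsClique c ∧ (c.ncard = 1 ∨ c.ncard = 2)) ∧
  (∀ c ∈ 𝔸, c.ncard = 1 → ∀ c' ∈ 𝔸, c'.ncard = 2 → ¬ c ⊆ c') ∧
  (∀ u v, CAdj 𝔸 u v → (∀ w, CAdj 𝔸 u w → w = v) ∨ (∀ w, CAdj 𝔸 v w → w = u)) ∧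
  (∀ s ∈ 𝕊, ∀ x ∈ s, ∀ y ∈ s, x ≠ y → ¬ G.Adj x y) ∧
  ⋃₀ 𝔸 = Set.univ ∧ ⋃₀ 𝕊 = Set.univ ∧
  ∀ c ∈ 𝔸, ∀ s ∈ 𝕊, (c ∩ s).Nonempty

/-- `Q` is a set consisting of exactly one center for each star of `E[𝔸]`:
every clique of `𝔸` contains exactly one vertex of `Q`, every vertex shared by two
distinct cliques (i.e. every genuine star center) is in `Q`, and `Q ⊆ ⋃₀ 𝔸`. -/
def IsCenterSet {V : Type*} (𝔸 : Set (Set V)) (Q : Set V) : Prop :=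
  (∀ c ∈ 𝔸, ∃! q, q ∈ Q ∧ q ∈ c) ∧
  (∀ v, (∃ c ∈ 𝔸, ∃ c' ∈ 𝔸, c ≠ c' ∧ v ∈ c ∧ v ∈ c') → v ∈ Q) ∧
  Q ⊆ ⋃₀ 𝔸

/-- The independence number of `G`. -/
noncomputable def indepNum {V : Type*} [Fintype V] (G : SimpleGraph V) : ℕ :=
  sSup {k | ∃ s : Set V, (∀ x ∈ s, ∀ y ∈ s, x ≠ y → ¬ G.Adj x y) ∧ s.ncard = k}

/-- A normal triangle-free graph admits a star covering whose star forest has at most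
`α(G)` stars (i.e. whose set of star centers has size at most the independence number). -/
theorem normal_triangleFree_starCovering_card_le_indepNum
    {V : Type*} [Fintype V] (G : SimpleGraph V)
    (htf : G.CliqueFree 3) (hn : IsNormal G) :
    ∃ (𝔸 𝕊 : Set (Set V)) (Q : Set V),
      StarCovering G 𝔸 𝕊 ∧ IsCenterSet 𝔸 Q ∧ Q.ncard ≤ indepNum G := by
  classical
  obtain ⟨A0, S0, hA0c, hS0i, hA0u, hS0u, hmeetA⟩ := hn
  rcases isEmpty_or_nonempty V with hV | hV
  · refine ⟨∅, ∅, ∅, ⟨?_, ?_, ?_, ?_, ?_, ?_, ?_⟩, ⟨?_, ?_, ?_⟩, ?_⟩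
    · exact fun c hc => absurd hc (Set.notMem_empty c)
    · exact fun c hc => absurd hc (Set.notMem_empty c)
    · exact fun u v hc => absurd hc.2 (Set.notMem_empty _)
    · exact fun s hs => absurd hs (Set.notMem_empty s)
    · rw [Set.sUnion_empty]; exact (Set.univ_eq_empty_iff.mpr hV).symm
    · rw [Set.sUnion_empty]; exact (Set.univ_eq_empty_iff.mpr hV).symm
    · exact fun c hc => absurd hc (Set.notMem_empty c)
    · exact fun c hc => absurd hc (Set.notMem_empty c)
    · exact fun v ⟨c, hc, _⟩ => absurd hc (Set.notMem_empty c)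
    · exact Set.empty_subset _
    · rw [Set.ncard_empty]; exact Nat.zero_le _
  obtain ⟨x0⟩ := hV
  have hx0 : x0 ∈ ⋃₀ S0 := hS0u ▸ Set.mem_univ x0
  obtain ⟨s0, hs0S, -⟩ := Set.mem_sUnion.1 hx0
  have hs0i := hS0i s0 hs0S
  -- no three distinct vertices in a clique of A0
  have hkey : ∀ c ∈ A0, ∀ x ∈ c, ∀ y ∈ c, ∀ z ∈ c, x = y ∨ x = z ∨ y = z := by
    intro c hc x hx y hy z hz
    by_contra h
    push_neg at h
    obtain ⟨hxy, hxz, hyz⟩ := h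
    exact htf {x, y, z} (SimpleGraph.is3Clique_triple_iff.2
      ⟨hA0c c hc hx hy hxy, hA0c c hc hx hz hxz, hA0c c hc hy hz hyz⟩)
  have hA0cov : ∀ x : V, ∃ c ∈ A0, x ∈ c := by
    intro x
    exact Set.mem_sUnion.1 (hA0u ▸ Set.mem_univ x)
  have hpairc : ∀ c ∈ A0, ∀ v ∈ c, ∀ q ∈ c, v ≠ q → c = ({v, q} : Set V) := by
    intro c hc v hv q hq hne
    apply Set.Subset.antisymm
    · intro w hw
      rcases hkey c hc w hw v hv q hq with rfl | rfl | h
      · exact Set.mem_insert _ _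
      · exact Set.mem_insert_iff.2 (Or.inr rfl)
      · exact absurd h hne
    · intro w hw
      rcases Set.mem_insert_iff.1 hw with rfl | hw
      · exact hv
      · rw [Set.mem_singleton_iff] at hw; exact hw ▸ hq
  obtain ⟨E0, hE0⟩ : ∃ E0 : Set (V × V),
      ∀ e : V × V, e ∈ E0 ↔ e.1 ∉ s0 ∧ e.2 ∈ s0 ∧ ({e.1, e.2} : Set V) ∈ A0 :=
    ⟨{e : V × V | e.1 ∉ s0 ∧ e.2 ∈ s0 ∧ ({e.1, e.2} : Set V) ∈ A0}, fun _ => Iff.rfl⟩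
  have hF1 : ∀ v, v ∉ s0 → ∃ q, (v, q) ∈ E0 := by
    intro v hv
    obtain ⟨c, hc, hvc⟩ := hA0cov v
    obtain ⟨q, hq1, hq2⟩ := hmeetA c hc s0 hs0S
    have hne : v ≠ q := fun h => hv (h ▸ hq2)
    exact ⟨q, (hE0 (v, q)).2 ⟨hv, hq2, (hpairc c hc v hvc q hq1 hne) ▸ hc⟩⟩
  have hF2 : ∀ q, q ∈ s0 → ({q} : Set V) ∉ A0 → ∃ v, (v, q) ∈ E0 := by
    intro q hq hnq
    obtain ⟨c, hc, hqc⟩ := hA0cov q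
    have hex : ∃ v ∈ c, v ≠ q := by
      by_contra h
      push_neg at h
      apply hnq
      have hcq : c = {q} :=
        Set.Subset.antisymm (fun w hw => Set.mem_singleton_iff.2 (h w hw))
          (Set.singleton_subset_iff.2 hqc)
      exact hcq ▸ hc
    obtain ⟨v, hvc, hvq⟩ := hex
    have hvs : v ∉ s0 := fun hvs => hs0i v hvs q hq hvq (hA0c c hc hvc hqc hvq)
    exact ⟨v, (hE0 (v, q)).2 ⟨hvs, hq, (hpairc c hc v hvc q hqc hvq) ▸ hc⟩⟩
  -- maximal matching
  obtain ⟨M, hMM, hMmax⟩ := Set.Finite.exists_maximalFor id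
      {N : Set (V × V) | N ⊆ E0 ∧ ∀ e ∈ N, ∀ f ∈ N, e ≠ f → e.1 ≠ f.1 ∧ e.2 ≠ f.2}
      (Set.toFinite _) ⟨∅, Set.empty_subset _, fun e he => absurd he (Set.notMem_empty e)⟩
  obtain ⟨hME0, hMm⟩ := hMM
  have hF3 : ∀ e ∈ E0, (∃ f ∈ M, f.1 = e.1) ∨ (∃ f ∈ M, f.2 = e.2) := by
    intro e he
    by_contra h
    push_neg at h
    obtain ⟨h1, h2⟩ := h
    have hins : insert e M ∈
        {N : Set (V × V) | N ⊆ E0 ∧ ∀ e ∈ N, ∀ f ∈ N, e ≠ f → e.1 ≠ f.1 ∧ e.2 ≠ f.2} := by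
      refine ⟨Set.insert_subset he hME0, ?_⟩
      intro a ha b hb hab
      rcases Set.mem_insert_iff.1 ha with rfl | ha2
      · rcases Set.mem_insert_iff.1 hb with rfl | hb2
        · exact absurd rfl hab
        · exact ⟨fun hh => h1 b hb2 hh.symm, fun hh => h2 b hb2 hh.symm⟩
      · rcases Set.mem_insert_iff.1 hb with rfl | hb2
        · exact ⟨h1 a ha2, h2 a ha2⟩
        · exact hMm a ha2 b hb2 hab
    have heq : M = insert e M := le_antisymm (Set.subset_insert _ _) (hMmax hins (Set.subset_insert _ _))
    have heM : e ∈ M := by rw [heq]; exact Set.mem_insert _ _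
    exact h1 e heM rfl
  obtain ⟨Vm, hVm⟩ : ∃ S : Set V, ∀ x, x ∈ S ↔ ∃ f ∈ M, f.1 = x :=
    ⟨{x | ∃ f ∈ M, f.1 = x}, fun _ => Iff.rfl⟩
  obtain ⟨Qm, hQm⟩ : ∃ S : Set V, ∀ x, x ∈ S ↔ ∃ f ∈ M, f.2 = x :=
    ⟨{x | ∃ f ∈ M, f.2 = x}, fun _ => Iff.rfl⟩
  choose! φ hφ using hF1
  choose! ψ hψ using hF2
  obtain ⟨Lw, hLw⟩ : ∃ L : Set (V × V), ∀ e, e ∈ L ↔ ∃ v, v ∉ s0 ∧ v ∉ Vm ∧ e = (v, φ v) :=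
    ⟨{e : V × V | ∃ v, v ∉ s0 ∧ v ∉ Vm ∧ e = (v, φ v)}, fun _ => Iff.rfl⟩
  obtain ⟨Lq, hLq⟩ : ∃ L : Set (V × V),
      ∀ e, e ∈ L ↔ ∃ q, q ∈ s0 ∧ ({q} : Set V) ∉ A0 ∧ q ∉ Qm ∧ e = (ψ q, q) :=
    ⟨{e : V × V | ∃ q, q ∈ s0 ∧ ({q} : Set V) ∉ A0 ∧ q ∉ Qm ∧ e = (ψ q, q)}, fun _ => Iff.rfl⟩
  obtain ⟨CW, hCW⟩ : ∃ S : Set V, ∀ x, x ∈ S ↔ ∃ e ∈ Lq, e.1 = x :=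
    ⟨{x | ∃ e ∈ Lq, e.1 = x}, fun _ => Iff.rfl⟩
  obtain ⟨CQ, hCQ⟩ : ∃ S : Set V, ∀ x, x ∈ S ↔ ∃ e ∈ Lw, e.2 = x :=
    ⟨{x | ∃ e ∈ Lw, e.2 = x}, fun _ => Iff.rfl⟩
  obtain ⟨E', hE'⟩ : ∃ E' : Set (V × V),
      ∀ e, e ∈ E' ↔ (e ∈ M ∧ ¬(e.1 ∈ CW ∧ e.2 ∈ CQ)) ∨ e ∈ Lw ∨ e ∈ Lq :=
    ⟨{e : V × V | (e ∈ M ∧ ¬(e.1 ∈ CW ∧ e.2 ∈ CQ)) ∨ e ∈ Lw ∨ e ∈ Lq}, fun _ => Iff.rfl⟩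
  have hLwE0 : ∀ e ∈ Lw, e ∈ E0 := by
    intro e he
    obtain ⟨v, h1, h2, rfl⟩ := (hLw e).1 he
    exact hφ v h1
  have hLqE0 : ∀ e ∈ Lq, e ∈ E0 := by
    intro e he
    obtain ⟨q, h1, h2, h3, rfl⟩ := (hLq e).1 he
    exact hψ q h1 h2
  have hE'E0 : ∀ e ∈ E', e ∈ E0 := by
    intro e he
    rcases (hE' e).1 he with ⟨h, -⟩ | h | h
    exacts [hME0 h, hLwE0 e h, hLqE0 e h]
  have hE'1 : ∀ e ∈ E', e.1 ∉ s0 := fun e he => ((hE0 e).1 (hE'E0 e he)).1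
  have hE'2 : ∀ e ∈ E', e.2 ∈ s0 := fun e he => ((hE0 e).1 (hE'E0 e he)).2.1
  have hE'A0 : ∀ e ∈ E', ({e.1, e.2} : Set V) ∈ A0 := fun e he => ((hE0 e).1 (hE'E0 e he)).2.2
  have hVms0 : ∀ x ∈ Vm, x ∉ s0 := by
    intro x hx
    obtain ⟨f, hf, rfl⟩ := (hVm x).1 hx
    exact ((hE0 f).1 (hME0 hf)).1
  have hQms0 : ∀ x ∈ Qm, x ∈ s0 := by
    intro x hx
    obtain ⟨f, hf, rfl⟩ := (hQm x).1 hx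
    exact ((hE0 f).1 (hME0 hf)).2.1
  have hLw1 : ∀ e ∈ Lw, e.1 ∉ Vm := by
    intro e he
    obtain ⟨v, h1, h2, rfl⟩ := (hLw e).1 he
    exact h2
  have hLq2 : ∀ e ∈ Lq, e.2 ∉ Qm := by
    intro e he
    obtain ⟨q, h1, h2, h3, rfl⟩ := (hLq e).1 he
    exact h3
  have hMVm : ∀ e ∈ M, e.1 ∈ Vm := fun e he => (hVm e.1).2 ⟨e, he, rfl⟩
  have hMQm : ∀ e ∈ M, e.2 ∈ Qm := fun e he => (hQm e.2).2 ⟨e, he, rfl⟩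
  have hLw2Qm : ∀ e ∈ Lw, e.2 ∈ Qm := by
    intro e he
    rcases hF3 e (hLwE0 e he) with ⟨f, hf, hf1⟩ | ⟨f, hf, hf2⟩
    · exact absurd ((hVm e.1).2 ⟨f, hf, hf1⟩) (hLw1 e he)
    · exact (hQm e.2).2 ⟨f, hf, hf2⟩
  have hLq1Vm : ∀ e ∈ Lq, e.1 ∈ Vm := by
    intro e he
    rcases hF3 e (hLqE0 e he) with ⟨f, hf, hf1⟩ | ⟨f, hf, hf2⟩
    · exact (hVm e.1).2 ⟨f, hf, hf1⟩
    · exact absurd ((hQm e.2).2 ⟨f, hf, hf2⟩) (hLq2 e he)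
  have hCWVm : ∀ x ∈ CW, x ∈ Vm := by
    intro x hx
    obtain ⟨e, he, rfl⟩ := (hCW x).1 hx
    exact hLq1Vm e he
  have hCQQm : ∀ x ∈ CQ, x ∈ Qm := by
    intro x hx
    obtain ⟨e, he, rfl⟩ := (hCQ x).1 hx
    exact hLw2Qm e he
  have hCWs0 : ∀ x ∈ CW, x ∉ s0 := fun x hx => hVms0 x (hCWVm x hx)
  have hCQs0 : ∀ x ∈ CQ, x ∈ s0 := fun x hx => hQms0 x (hCQQm x hx)
  have hLwfun : ∀ e ∈ Lw, ∀ f ∈ Lw, e.1 = f.1 → e = f := by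
    intro e he f hf h
    obtain ⟨v, -, -, rfl⟩ := (hLw e).1 he
    obtain ⟨w, -, -, rfl⟩ := (hLw f).1 hf
    simp only [Prod.fst] at h
    rw [h]
  have hLqfun : ∀ e ∈ Lq, ∀ f ∈ Lq, e.2 = f.2 → e = f := by
    intro e he f hf h
    obtain ⟨q, -, -, -, rfl⟩ := (hLq e).1 he
    obtain ⟨r, -, -, -, rfl⟩ := (hLq f).1 hf
    simp only [Prod.snd] at h
    rw [h]
  have hMfun1 : ∀ e ∈ M, ∀ f ∈ M, e.1 = f.1 → e = f := by
    intro e he f hf h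
    by_contra hne
    exact (hMm e he f hf hne).1 h
  have hMfun2 : ∀ e ∈ M, ∀ f ∈ M, e.2 = f.2 → e = f := by
    intro e he f hf h
    by_contra hne
    exact (hMm e he f hf hne).2 h
  have hL1 : ∀ e ∈ E', ∀ f ∈ E', e.1 ∉ CW → e.1 = f.1 → e = f := by
    intro e he f hf hcw h1
    rcases (hE' e).1 he with ⟨heM, -⟩ | heLw | heLq
    · rcases (hE' f).1 hf with ⟨hfM, -⟩ | hfLw | hfLq
      · exact hMfun1 e heM f hfM h1
      · exact absurd (h1 ▸ hMVm e heM) (hLw1 f hfLw)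
      · exact absurd ((hCW e.1).2 ⟨f, hfLq, h1.symm⟩) hcw
    · rcases (hE' f).1 hf with ⟨hfM, -⟩ | hfLw | hfLq
      · exact absurd (h1.symm ▸ hMVm f hfM) (hLw1 e heLw)
      · exact hLwfun e heLw f hfLw h1
      · exact absurd (h1.symm ▸ hLq1Vm f hfLq) (hLw1 e heLw)
    · exact absurd ((hCW e.1).2 ⟨e, heLq, rfl⟩) hcw
  have hL2 : ∀ e ∈ E', ∀ f ∈ E', e.2 ∉ CQ → e.2 = f.2 → e = f := by
    intro e he f hf hcq h2
    rcases (hE' e).1 he with ⟨heM, -⟩ | heLw | heLq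
    · rcases (hE' f).1 hf with ⟨hfM, -⟩ | hfLw | hfLq
      · exact hMfun2 e heM f hfM h2
      · exact absurd ((hCQ e.2).2 ⟨f, hfLw, h2.symm⟩) hcq
      · exact absurd (h2 ▸ hMQm e heM) (hLq2 f hfLq)
    · exact absurd ((hCQ e.2).2 ⟨e, heLw, rfl⟩) hcq
    · rcases (hE' f).1 hf with ⟨hfM, -⟩ | hfLw | hfLq
      · exact absurd (h2.symm ▸ hMQm f hfM) (hLq2 e heLq)
      · exact absurd (h2.symm ▸ hLw2Qm f hfLw) (hLq2 e heLq)
      · exact hLqfun e heLq f hfLq h2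
  have hL3 : ∀ e ∈ E', e.1 ∉ CW ∨ e.2 ∉ CQ := by
    intro e he
    rcases (hE' e).1 he with ⟨-, h⟩ | heLw | heLq
    · by_cases h1 : e.1 ∈ CW
      · exact Or.inr fun h2 => h ⟨h1, h2⟩
      · exact Or.inl h1
    · exact Or.inl fun hc => hLw1 e heLw (hCWVm _ hc)
    · exact Or.inr fun hc => hLq2 e heLq (hCQQm _ hc)
  obtain ⟨A1, hA1⟩ : ∃ A1 : Set (Set V), ∀ c, c ∈ A1 ↔
      (∃ e ∈ E', c = ({e.1, e.2} : Set V)) ∨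
        (∃ q, q ∈ s0 ∧ (¬∃ e ∈ E', e.2 = q) ∧ c = {q}) :=
    ⟨{c : Set V | (∃ e ∈ E', c = ({e.1, e.2} : Set V)) ∨
        (∃ q, q ∈ s0 ∧ (¬∃ e ∈ E', e.2 = q) ∧ c = {q})}, fun _ => Iff.rfl⟩
  obtain ⟨Q, hQ⟩ : ∃ Q : Set V, ∀ x, x ∈ Q ↔
      x ∈ CW ∨ x ∈ CQ ∨ (∃ e ∈ M, e.1 ∉ CW ∧ e.2 = x) ∨
        (x ∈ s0 ∧ ¬∃ e ∈ E', e.2 = x) :=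
    ⟨{x : V | x ∈ CW ∨ x ∈ CQ ∨ (∃ e ∈ M, e.1 ∉ CW ∧ e.2 = x) ∨
        (x ∈ s0 ∧ ¬∃ e ∈ E', e.2 = x)}, fun _ => Iff.rfl⟩
  have hsingA0 : ∀ q, q ∈ s0 → (¬∃ e ∈ E', e.2 = q) → ({q} : Set V) ∈ A0 := by
    intro q hq hnq
    by_contra hqA
    by_cases hqm : q ∈ Qm
    · obtain ⟨e, heM, he2⟩ := (hQm q).1 hqm
      by_cases hem : e.1 ∈ CW ∧ e.2 ∈ CQ
      · obtain ⟨f, hfLw, hf2⟩ := (hCQ e.2).1 hem.2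
        exact hnq ⟨f, (hE' f).2 (Or.inr (Or.inl hfLw)), by rw [hf2, he2]⟩
      · exact hnq ⟨e, (hE' e).2 (Or.inl ⟨heM, hem⟩), he2⟩
    · exact hnq ⟨(ψ q, q), (hE' _).2 (Or.inr (Or.inr ((hLq _).2 ⟨q, hq, hqA, hqm, rfl⟩))), rfl⟩
  have hA1A0 : ∀ c ∈ A1, c ∈ A0 := by
    intro c hc
    rcases (hA1 c).1 hc with ⟨e, he, rfl⟩ | ⟨q, hq1, hq2, rfl⟩
    · exact hE'A0 e he
    · exact hsingA0 q hq1 hq2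
  have hCadj : ∀ u w, CAdj A1 u w →
      ∃ e ∈ E', (u = e.1 ∧ w = e.2) ∨ (u = e.2 ∧ w = e.1) := by
    rintro u w ⟨hne, hmem⟩
    rcases (hA1 _).1 hmem with ⟨e, he, hp⟩ | ⟨q, hq1, hq2, hp⟩
    · rw [Set.pair_eq_pair_iff] at hp
      rcases hp with ⟨h1, h2⟩ | ⟨h1, h2⟩
      · exact ⟨e, he, Or.inl ⟨h1, h2⟩⟩
      · exact ⟨e, he, Or.inr ⟨h1, h2⟩⟩
    · exfalso
      have hu : u ∈ ({q} : Set V) := hp ▸ Set.mem_insert _ _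
      have hw : w ∈ ({q} : Set V) := hp ▸ Set.mem_insert_iff.2 (Or.inr rfl)
      rw [Set.mem_singleton_iff] at hu hw
      exact hne (by rw [hu, hw])
  have hstarW : ∀ e ∈ E', e.1 ∉ CW → ∀ w, CAdj A1 e.1 w → w = e.2 := by
    intro e he h1 w hc
    obtain ⟨f, hf, hcase⟩ := hCadj _ _ hc
    rcases hcase with ⟨h3, h4⟩ | ⟨h3, h4⟩
    · rw [h4, hL1 e he f hf h1 h3]
    · exact absurd (hE'2 f hf) (by rw [← h3]; exact hE'1 e he)
  have hstarQ : ∀ e ∈ E', e.2 ∉ CQ → ∀ w, CAdj A1 e.2 w → w = e.1 := by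
    intro e he h2 w hc
    obtain ⟨f, hf, hcase⟩ := hCadj _ _ hc
    rcases hcase with ⟨h3, h4⟩ | ⟨h3, h4⟩
    · exact absurd (hE'2 e he) (by rw [h3]; exact hE'1 f hf)
    · rw [h4, hL2 e he f hf h2 h3]
  have hQW : ∀ x, x ∉ s0 → x ∈ Q → x ∈ CW := by
    intro x hx hxQ
    rcases (hQ x).1 hxQ with h | h | ⟨f, hf, -, hf2⟩ | ⟨h, -⟩
    · exact h
    · exact absurd (hCQs0 x h) hx
    · exact absurd (hf2 ▸ hQms0 _ (hMQm f hf)) hx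
    · exact absurd h hx
  have hQs0' : ∀ x, x ∈ s0 → x ∈ Q →
      x ∈ CQ ∨ (∃ f ∈ M, f.1 ∉ CW ∧ f.2 = x) ∨ ¬∃ e ∈ E', e.2 = x := by
    intro x hx hxQ
    rcases (hQ x).1 hxQ with h | h | h | ⟨-, h⟩
    · exact absurd hx (hCWs0 x h)
    · exact Or.inl h
    · exact Or.inr (Or.inl h)
    · exact Or.inr (Or.inr h)
  have hne12 : ∀ e ∈ E', e.1 ≠ e.2 := fun e he h => hE'1 e he (by rw [h]; exact hE'2 e he)
  refine ⟨A1, S0, Q, ⟨?_, ?_, ?_, hS0i, ?_, hS0u, ?_⟩, ⟨?_, ?_, ?_⟩, ?_⟩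
  · -- cliques of size 1 or 2
    intro c hc
    refine ⟨hA0c c (hA1A0 c hc), ?_⟩
    rcases (hA1 c).1 hc with ⟨e, he, rfl⟩ | ⟨q, -, -, rfl⟩
    · exact Or.inr (Set.ncard_pair (hne12 e he))
    · exact Or.inl (Set.ncard_singleton q)
  · -- no K1 inside K2
    intro c hc h1 c' hc' h2 hsub
    rcases (hA1 c).1 hc with ⟨e, he, rfl⟩ | ⟨q, hq1, hq2, rfl⟩
    · rw [Set.ncard_pair (hne12 e he)] at h1
      exact absurd h1 (by norm_num)
    · rcases (hA1 c').1 hc' with ⟨f, hf, rfl⟩ | ⟨q', -, -, rfl⟩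
      · have hqf := hsub (Set.mem_singleton q)
        rcases Set.mem_insert_iff.1 hqf with h | h
        · exact hE'1 f hf (h ▸ hq1)
        · rw [Set.mem_singleton_iff] at h
          exact hq2 ⟨f, hf, h.symm⟩
      · rw [Set.ncard_singleton] at h2
        exact absurd h2 (by norm_num)
  · -- star condition
    intro u w hc
    obtain ⟨e, he, hcase⟩ := hCadj u w hc
    rcases hcase with ⟨h1, h2⟩ | ⟨h1, h2⟩
    · subst h1; subst h2
      rcases hL3 e he with h | h
      · exact Or.inl (hstarW e he h)
      · exact Or.inr (hstarQ e he h)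
    · subst h1; subst h2
      rcases hL3 e he with h | h
      · exact Or.inr (hstarW e he h)
      · exact Or.inl (hstarQ e he h)
  · -- covering by A1
    apply Set.eq_univ_of_forall
    intro x
    rw [Set.mem_sUnion]
    by_cases hx : x ∈ s0
    · by_cases hxe : ∃ e ∈ E', e.2 = x
      · obtain ⟨e, he, he2⟩ := hxe
        exact ⟨{e.1, e.2}, (hA1 _).2 (Or.inl ⟨e, he, rfl⟩),
          by rw [← he2]; exact Set.mem_insert_iff.2 (Or.inr rfl)⟩
      · exact ⟨{x}, (hA1 _).2 (Or.inr ⟨x, hx, hxe, rfl⟩), rfl⟩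
    · by_cases hxv : x ∈ Vm
      · obtain ⟨e, heM, he1⟩ := (hVm x).1 hxv
        by_cases hem : e.1 ∈ CW ∧ e.2 ∈ CQ
        · obtain ⟨f, hfLq, hf1⟩ := (hCW e.1).1 hem.1
          exact ⟨{f.1, f.2}, (hA1 _).2 (Or.inl ⟨f, (hE' f).2 (Or.inr (Or.inr hfLq)), rfl⟩),
            by rw [← he1, ← hf1]; exact Set.mem_insert _ _⟩
        · exact ⟨{e.1, e.2}, (hA1 _).2 (Or.inl ⟨e, (hE' e).2 (Or.inl ⟨heM, hem⟩), rfl⟩),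
            by rw [← he1]; exact Set.mem_insert _ _⟩
      · exact ⟨{x, φ x}, (hA1 _).2 (Or.inl ⟨(x, φ x),
          (hE' _).2 (Or.inr (Or.inl ((hLw _).2 ⟨x, hx, hxv, rfl⟩))), rfl⟩),
          Set.mem_insert _ _⟩
  · -- meet
    exact fun c hc s hs => hmeetA c (hA1A0 c hc) s hs
  · -- exactly one center per clique
    intro c hc
    rcases (hA1 c).1 hc with ⟨e, he, rfl⟩ | ⟨q, hq1, hq2, rfl⟩
    · have notins0 : e.1 ∉ s0 := hE'1 e he
      have ins0 : e.2 ∈ s0 := hE'2 e he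
      have hcent : (e.1 ∈ Q ∧ e.2 ∉ Q) ∨ (e.2 ∈ Q ∧ e.1 ∉ Q) := by
        rcases (hE' e).1 he with ⟨heM, hem⟩ | heLw | heLq
        · by_cases h1 : e.1 ∈ CW
          · refine Or.inl ⟨(hQ _).2 (Or.inl h1), ?_⟩
            intro h2Q
            rcases hQs0' e.2 ins0 h2Q with h | ⟨f, hfM, hf1, hf2⟩ | h
            · exact hem ⟨h1, h⟩
            · have hfe : f = e := hMfun2 f hfM e heM hf2
              exact hf1 (by rw [hfe]; exact h1)
            · exact h ⟨e, he, rfl⟩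
          · refine Or.inr ⟨(hQ _).2 (Or.inr (Or.inr (Or.inl ⟨e, heM, h1, rfl⟩))), ?_⟩
            exact fun hq => h1 (hQW e.1 notins0 hq)
        · refine Or.inr ⟨(hQ _).2 (Or.inr (Or.inl ((hCQ _).2 ⟨e, heLw, rfl⟩))), ?_⟩
          exact fun hq => hLw1 e heLw (hCWVm _ (hQW e.1 notins0 hq))
        · refine Or.inl ⟨(hQ _).2 (Or.inl ((hCW _).2 ⟨e, heLq, rfl⟩)), ?_⟩
          intro h2Q
          rcases hQs0' e.2 ins0 h2Q with h | ⟨f, hfM, -, hf2⟩ | h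
          · exact hLq2 e heLq (hCQQm _ h)
          · exact hLq2 e heLq ((hQm _).2 ⟨f, hfM, hf2⟩)
          · exact h ⟨e, he, rfl⟩
      rcases hcent with ⟨h1, h2⟩ | ⟨h1, h2⟩
      · refine ⟨e.1, ⟨h1, Set.mem_insert _ _⟩, ?_⟩
        rintro y ⟨hyQ, hyc⟩
        rcases Set.mem_insert_iff.1 hyc with h | h
        · exact h
        · rw [Set.mem_singleton_iff] at h
          exact absurd (h ▸ hyQ) h2
      · refine ⟨e.2, ⟨h1, Set.mem_insert_iff.2 (Or.inr rfl)⟩, ?_⟩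
        rintro y ⟨hyQ, hyc⟩
        rcases Set.mem_insert_iff.1 hyc with h | h
        · exact absurd (h ▸ hyQ) h2
        · rw [Set.mem_singleton_iff] at h
          exact h
    · refine ⟨q, ⟨(hQ q).2 (Or.inr (Or.inr (Or.inr ⟨hq1, hq2⟩))), rfl⟩, ?_⟩
      rintro y ⟨-, hy⟩
      exact Set.mem_singleton_iff.1 hy
  · -- shared vertices are in Q
    rintro v ⟨c, hc, c', hc', hne, hvc, hvc'⟩
    have hsingQ : ∀ q, q ∈ s0 → (¬∃ e ∈ E', e.2 = q) → q ∈ Q :=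
      fun q h1 h2 => (hQ q).2 (Or.inr (Or.inr (Or.inr ⟨h1, h2⟩)))
    rcases (hA1 c).1 hc with ⟨e, he, rfl⟩ | ⟨q, hq1, hq2, rfl⟩
    · rcases (hA1 c').1 hc' with ⟨f, hf, rfl⟩ | ⟨q, hq1, hq2, rfl⟩
      · rcases Set.mem_insert_iff.1 hvc with rfl | hvc2
        · rcases Set.mem_insert_iff.1 hvc' with h | h
          · by_cases hcw : e.1 ∈ CW
            · exact (hQ _).2 (Or.inl hcw)
            · exact absurd (by rw [hL1 e he f hf hcw h]) hne
          · rw [Set.mem_singleton_iff] at h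
            exact absurd (h ▸ hE'1 e he) (fun hk => hk (hE'2 f hf))
        · rw [Set.mem_singleton_iff] at hvc2
          subst hvc2
          rcases Set.mem_insert_iff.1 hvc' with h | h
          · exact absurd (hE'2 e he) (h ▸ hE'1 f hf)
          · rw [Set.mem_singleton_iff] at h
            by_cases hcq : e.2 ∈ CQ
            · exact (hQ _).2 (Or.inr (Or.inl hcq))
            · exact absurd (by rw [hL2 e he f hf hcq h]) hne
      · rw [Set.mem_singleton_iff] at hvc'
        subst hvc'
        exact hsingQ v hq1 hq2
    · rw [Set.mem_singleton_iff] at hvc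
      subst hvc
      exact hsingQ v hq1 hq2
  · -- Q ⊆ ⋃₀ A1
    intro x hx
    rw [Set.mem_sUnion]
    rcases (hQ x).1 hx with h | h | ⟨f, hfM, hf1, hf2⟩ | ⟨h1, h2⟩
    · obtain ⟨f, hfLq, hf1⟩ := (hCW x).1 h
      exact ⟨{f.1, f.2}, (hA1 _).2 (Or.inl ⟨f, (hE' f).2 (Or.inr (Or.inr hfLq)), rfl⟩),
        by rw [← hf1]; exact Set.mem_insert _ _⟩
    · obtain ⟨f, hfLw, hf2⟩ := (hCQ x).1 h
      exact ⟨{f.1, f.2}, (hA1 _).2 (Or.inl ⟨f, (hE' f).2 (Or.inr (Or.inl hfLw)), rfl⟩),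
        by rw [← hf2]; exact Set.mem_insert_iff.2 (Or.inr rfl)⟩
    · exact ⟨{f.1, f.2},
        (hA1 _).2 (Or.inl ⟨f, (hE' f).2 (Or.inl ⟨hfM, fun hc => hf1 hc.1⟩), rfl⟩),
        by rw [← hf2]; exact Set.mem_insert_iff.2 (Or.inr rfl)⟩
    · exact ⟨{x}, (hA1 _).2 (Or.inr ⟨x, h1, h2, rfl⟩), rfl⟩
  · -- cardinality bound
    have hbound : s0.ncard ≤ indepNum G := by
      have hbdd : BddAbove {k | ∃ s : Set V,
          (∀ x ∈ s, ∀ y ∈ s, x ≠ y → ¬G.Adj x y) ∧ s.ncard = k} := by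
        refine ⟨Nat.card V, ?_⟩
        rintro k ⟨s, -, rfl⟩
        rw [← Set.ncard_univ]
        exact Set.ncard_le_ncard (Set.subset_univ s) Set.finite_univ
      exact le_csSup hbdd ⟨s0, hs0i, rfl⟩
    refine le_trans ?_ hbound
    obtain ⟨F, hF⟩ : ∃ F : V → V, ∀ x,
        (∃ e ∈ Lq, e.1 = x ∧ F x = e.2) ∨ ((¬∃ e ∈ Lq, e.1 = x) ∧ F x = x) := by
      refine ⟨fun x => if h : ∃ e, e ∈ Lq ∧ e.1 = x then h.choose.2 else x, fun x => ?_⟩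
      by_cases h : ∃ e, e ∈ Lq ∧ e.1 = x
      · exact Or.inl ⟨h.choose, h.choose_spec.1, h.choose_spec.2, by simp only [dif_pos h]⟩
      · exact Or.inr ⟨h, by simp only [dif_neg h]⟩
    have hFs0 : ∀ x ∈ Q, F x ∈ s0 := by
      intro x hx
      rcases hF x with ⟨e, heLq, he1, hFx⟩ | ⟨hno, hFx⟩
      · rw [hFx]
        exact ((hE0 e).1 (hLqE0 e heLq)).2.1
      · rw [hFx]
        have hxcw : x ∉ CW := fun hc => hno ((hCW x).1 hc)
        rcases (hQ x).1 hx with h | h | ⟨f, hfM, -, hf2⟩ | ⟨h, -⟩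
        · exact absurd h hxcw
        · exact hCQs0 x h
        · exact hf2 ▸ hQms0 _ (hMQm f hfM)
        · exact h
    have hFinj : Set.InjOn F Q := by
      intro x hx y hy hxy
      rcases hF x with ⟨e, heLq, he1, hFx⟩ | ⟨hnox, hFx⟩ <;>
        rcases hF y with ⟨f, hfLq, hf1, hFy⟩ | ⟨hnoy, hFy⟩
      · rw [hFx, hFy] at hxy
        have hef := hLqfun e heLq f hfLq hxy
        rw [← he1, ← hf1, hef]
      · rw [hFx, hFy] at hxy
        exfalso
        have hycw : y ∉ CW := fun hc => hnoy ((hCW y).1 hc)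
        rcases (hQ y).1 hy with h | h | ⟨f, hfM, -, hf2⟩ | ⟨-, h⟩
        · exact hycw h
        · exact hLq2 e heLq (hxy.symm ▸ hCQQm y h)
        · exact hLq2 e heLq (hxy.symm ▸ (hQm y).2 ⟨f, hfM, hf2⟩)
        · exact h ⟨e, (hE' e).2 (Or.inr (Or.inr heLq)), hxy⟩
      · rw [hFx, hFy] at hxy
        exfalso
        have hxcw : x ∉ CW := fun hc => hnox ((hCW x).1 hc)
        rcases (hQ x).1 hx with h | h | ⟨g, hgM, -, hg2⟩ | ⟨-, h⟩
        · exact hxcw h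
        · exact hLq2 f hfLq (hxy ▸ hCQQm x h)
        · exact hLq2 f hfLq (hxy ▸ (hQm x).2 ⟨g, hgM, hg2⟩)
        · exact h ⟨f, (hE' f).2 (Or.inr (Or.inr hfLq)), hxy.symm⟩
      · rw [hFx, hFy] at hxy
        exact hxy
    calc Q.ncard = (F '' Q).ncard := (Set.ncard_image_of_injOn hFinj).symm
      _ ≤ s0.ncard := Set.ncard_le_ncard
          (by rintro y ⟨x, hx, rfl⟩; exact hFs0 x hx) (Set.toFinite s0)
end

section
/- Let G be a triangle-free graph with a star covering (𝔸, 𝕊), and let (Q, 𝒮) be its associated star system with associated directed graph Q* on Q, where x_i → x_j whenever a leaf of the star S_i is adjacent to x_j. If X ⊆ Q is an out-section of Q* (i.e., there exists v ∈ Q with a directed path in Q* from v to every x ∈ X), then the set of all leaves of the stars with centers in X is an independent set of G. -/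
/-- The leaves of the star of `E[𝔸]` centered at `q`. -/
def leavesOf {V : Type*} (𝔸 : Set (Set V)) (q : V) : Set V :=
  {v | v ≠ q ∧ ({q, v} : Set V) ∈ 𝔸}

/-- The arc relation of the directed graph `Q*` on the set of centers `Q`:
`q → q'` whenever some leaf of the star centered at `q` is adjacent to `q'` in `G`. -/
def QArc {V : Type*} (G : SimpleGraph V) (𝔸 : Set (Set V)) (Q : Set V) (q q' : V) : Prop :=
  q ∈ Q ∧ q' ∈ Q ∧ ∃ v ∈ leavesOf 𝔸 q, G.Adj v q'

/-- Out-section lemma: in a (normal) triangle-free graph with a star covering,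
if `X` is an out-section of the directed graph `Q*` on the star centers, then the
set of all leaves of stars with centers in `X` is an independent set of `G`. -/
theorem leaves_of_outSection_indep {V : Type*} (G : SimpleGraph V)
    (htf : G.CliqueFree 3) (𝔸 𝕊 : Set (Set V)) (Q : Set V)
    (hsc : StarCovering G 𝔸 𝕊) (hQ : IsCenterSet 𝔸 Q)
    (X : Set V) (hX : X ⊆ Q)
    (hout : ∃ v ∈ Q, ∀ x ∈ X, Relation.ReflTransGen (QArc G 𝔸 Q) v x) :
    ∀ x ∈ {w | ∃ q ∈ X, w ∈ leavesOf 𝔸 q}, ∀ y ∈ {w | ∃ q ∈ X, w ∈ leavesOf 𝔸 q},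
      x ≠ y → ¬ G.Adj x y := by
  obtain ⟨hcl, -, -, hSind, -, hScov, hmeet⟩ := hsc
  rintro x ⟨q, hqX, hxq⟩ y ⟨q', hq'X, hyq'⟩ hxy hadj
  obtain ⟨v, hvQ, hreach⟩ := hout
  have hadjCL : ∀ p m, m ∈ leavesOf 𝔸 p → G.Adj p m := fun p m hm =>
    (hcl _ hm.2).1 (by simp) (by simp) (Ne.symm hm.1)
  -- v has a leaf
  have hvleaf : (leavesOf 𝔸 v).Nonempty := by
    rcases (hreach q hqX).cases_head with h | ⟨c, hc, -⟩
    · subst h; exact ⟨x, hxq⟩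
    · obtain ⟨-, -, ℓ, hℓ, -⟩ := hc
      exact ⟨ℓ, hℓ⟩
  obtain ⟨ℓ0, hℓ0⟩ := hvleaf
  have hmem : ℓ0 ∈ ⋃₀ 𝕊 := hScov ▸ Set.mem_univ ℓ0
  obtain ⟨s, hs, hℓ0s⟩ := hmem
  -- if a center is not in s, then all its leaves are in s
  have hleaves_sub : ∀ p, p ∉ s → leavesOf 𝔸 p ⊆ s := by
    intro p hp m hm
    obtain ⟨z, hz1, hz2⟩ := hmeet _ hm.2 s hs
    simp only [Set.mem_insert_iff, Set.mem_singleton_iff] at hz1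
    rcases hz1 with rfl | rfl
    · exact absurd hz2 hp
    · exact hz2
  have hvs : v ∉ s := fun hv =>
    hSind s hs v hv ℓ0 hℓ0s (Ne.symm hℓ0.1) (hadjCL v ℓ0 hℓ0)
  -- propagation along Q*-paths: reachable centers are not in s
  have prop : ∀ b, Relation.ReflTransGen (QArc G 𝔸 Q) v b → b ∉ s := by
    intro b hb
    induction hb with
    | refl => exact hvs
    | tail hac harc ih =>
        obtain ⟨-, -, ℓ, hℓ, hadjℓ⟩ := harc
        intro hbs
        exact hSind s hs ℓ (hleaves_sub _ ih hℓ) _ hbs hadjℓ.ne hadjℓ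
  have hxs : x ∈ s := hleaves_sub q (prop q (hreach q hqX)) hxq
  have hys : y ∈ s := hleaves_sub q' (prop q' (hreach q' hq'X)) hyq'
  exact hSind s hs x hxs y hys hxy hadj
end

section
/- In the directed graph Q* associated to a star system of a normal triangle-free graph G where every star has at least k leaves, every strongly connected component C of Q* satisfies k·|C| ≤ α(G). -/
/-- In the directed graph `Q*` of a star system of a normal triangle-free graph in which
every star has at least `k` leaves, every strongly connected component `C` satisfies
`k * |C| ≤ α(G)`. -/
theorem scc_card_le_indepNum {V : Type*} [Fintype V] (G : SimpleGraph V)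
    (htf : G.CliqueFree 3) (𝔸 𝕊 : Set (Set V)) (Q : Set V)
    (hsc : StarCovering G 𝔸 𝕊) (hQ : IsCenterSet 𝔸 Q) (k : ℕ)
    (hleaves : ∀ q ∈ Q, k ≤ (leavesOf 𝔸 q).ncard)
    (C : Set V) (hCQ : C ⊆ Q)
    (hstrong : ∀ x ∈ C, ∀ y ∈ C, Relation.ReflTransGen (QArc G 𝔸 Q) x y) :
    k * C.ncard ≤ indepNum G := by
  classical
  obtain ⟨h𝔸, hK1, hstar, h𝕊ind, h𝔸cov, h𝕊cov, hmeet⟩ := hsc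
  obtain ⟨hQ1, hQ2, hQ3⟩ := hQ
  -- adjacency from 2-cliques of 𝔸
  have hadj : ∀ q v : V, ({q, v} : Set V) ∈ 𝔸 → q ≠ v → G.Adj q v := by
    intro q v h hne
    exact (h𝔸 _ h).1 (Set.mem_insert _ _) (by simp) hne
  -- a leaf of a center in Q is not in Q
  have hleafQ : ∀ q ∈ Q, ∀ v ∈ leavesOf 𝔸 q, v ∉ Q := by
    intro q hq v hv hvQ
    obtain ⟨hvq, hcl⟩ := hv
    obtain ⟨q₀, _, huniq⟩ := hQ1 _ hcl
    have h1 : q = q₀ := huniq q ⟨hq, Set.mem_insert _ _⟩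
    have h2 : v = q₀ := huniq v ⟨hvQ, by simp⟩
    exact hvq (h2.trans h1.symm)
  -- leaves of distinct centers are disjoint
  have hdisj : ∀ q ∈ Q, ∀ q' ∈ Q, q ≠ q' →
      ∀ v, v ∈ leavesOf 𝔸 q → v ∉ leavesOf 𝔸 q' := by
    intro q hq q' hq' hne v hv hv'
    apply hleafQ q hq v hv
    apply hQ2 v
    refine ⟨{q, v}, hv.2, {q', v}, hv'.2, ?_, by simp, by simp⟩
    intro hcontra
    have : q' ∈ ({q, v} : Set V) := hcontra ▸ Set.mem_insert _ _
    rcases this with h | h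
    · exact hne h.symm
    · exact hv'.1 h.symm
  set L : Set V := ⋃ q ∈ C, leavesOf 𝔸 q with hL
  -- L is independent
  have hLind : ∀ x ∈ L, ∀ y ∈ L, x ≠ y → ¬ G.Adj x y := by
    intro u hu v hv hne hadjuv
    simp only [hL, Set.mem_iUnion] at hu hv
    obtain ⟨q, hqC, hu⟩ := hu
    obtain ⟨q', hq'C, hv⟩ := hv
    have hqQ := hCQ hqC
    have hq'Q := hCQ hq'C
    have hqu : G.Adj q u := hadj q u hu.2 (Ne.symm hu.1)
    have hq'v : G.Adj q' v := hadj q' v hv.2 (Ne.symm hv.1)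
    by_cases hqq' : q = q'
    · subst hqq'
      exact htf {q, u, v} ((SimpleGraph.is3Clique_triple_iff).2 ⟨hqu, hq'v, hadjuv⟩)
    · -- main case
      obtain ⟨s, hs𝕊, hus⟩ : ∃ s ∈ 𝕊, u ∈ s := by
        have : u ∈ ⋃₀ 𝕊 := h𝕊cov ▸ Set.mem_univ u
        obtain ⟨s, hs, hus⟩ := this
        exact ⟨s, hs, hus⟩
      have hqs : q ∉ s := fun h =>
        h𝕊ind s hs𝕊 q h u hus (Ne.symm hu.1) hqu
      have hvs : v ∉ s := fun h =>
        h𝕊ind s hs𝕊 u hus v h hne hadjuv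
      have hq's : q' ∈ s := by
        obtain ⟨x, hx1, hx2⟩ := hmeet _ hv.2 s hs𝕊
        rcases hx1 with h | h
        · exact h ▸ hx2
        · simp only [Set.mem_singleton_iff] at h
          exact absurd (h ▸ hx2) hvs
      -- key propagation along arcs
      have key : ∀ r, Relation.ReflTransGen (QArc G 𝔸 Q) q r →
          r ∉ s ∧ ∀ w ∈ leavesOf 𝔸 r, w ∈ s := by
        have leaves_in : ∀ r, r ∉ s → ∀ w ∈ leavesOf 𝔸 r, w ∈ s := by
          intro r hrs w hw
          obtain ⟨x, hx1, hx2⟩ := hmeet _ hw.2 s hs𝕊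
          rcases hx1 with h | h
          · exact absurd (h ▸ hx2) hrs
          · simp only [Set.mem_singleton_iff] at h
            exact h ▸ hx2
        intro r hr
        induction hr with
        | refl => exact ⟨hqs, leaves_in q hqs⟩
        | tail hpr harc ih =>
          obtain ⟨_, _, w, hwleaf, hwadj⟩ := harc
          have hws : w ∈ s := ih.2 w hwleaf
          have hr's : _ ∉ s := fun h =>
            h𝕊ind s hs𝕊 w hws _ h (G.ne_of_adj hwadj) hwadj
          exact ⟨hr's, leaves_in _ hr's⟩
      exact (key q' (hstrong q hqC q' hq'C)).1 hq's
  -- counting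
  have hfin : ∀ q : V, (leavesOf 𝔸 q).Finite := fun q => Set.toFinite _
  have hCfin : C.Finite := Set.toFinite _
  have hLfin : L.Finite := Set.toFinite _
  set Cf : Finset V := hCfin.toFinset with hCf
  set lf : V → Finset V := fun q => (hfin q).toFinset with hlf
  have hbi : Cf.biUnion lf = hLfin.toFinset := by
    ext x
    rw [Set.Finite.mem_toFinset]
    simp only [Finset.mem_biUnion, hCf, hlf, Set.Finite.mem_toFinset, hL, Set.mem_iUnion]
    constructor
    · rintro ⟨i, h1, h2⟩; exact ⟨i, h1, h2⟩
    · rintro ⟨i, h1, h2⟩; exact ⟨i, h1, h2⟩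
  have hdisjf : ∀ q ∈ Cf, ∀ q' ∈ Cf, q ≠ q' → Disjoint (lf q) (lf q') := by
    intro q hq q' hq' hne
    rw [Finset.disjoint_left]
    intro a ha ha'
    simp only [hlf, Set.Finite.mem_toFinset] at ha ha'
    simp only [hCf, Set.Finite.mem_toFinset] at hq hq'
    exact hdisj q (hCQ hq) q' (hCQ hq') hne a ha ha'
  have hcard : k * C.ncard ≤ L.ncard := by
    have h1 : L.ncard = (Cf.biUnion lf).card := by
      rw [hbi, Set.ncard_eq_toFinset_card L hLfin]
    rw [h1, Finset.card_biUnion hdisjf]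
    have h2 : C.ncard = Cf.card := Set.ncard_eq_toFinset_card C hCfin
    rw [h2, mul_comm]
    calc Cf.card * k = ∑ _q ∈ Cf, k := by rw [Finset.sum_const, smul_eq_mul]
    _ ≤ ∑ q ∈ Cf, (lf q).card := by
        apply Finset.sum_le_sum
        intro q hq
        simp only [hCf, Set.Finite.mem_toFinset] at hq
        have := hleaves q (hCQ hq)
        rwa [Set.ncard_eq_toFinset_card (leavesOf 𝔸 q) (hfin q)] at this
  refine le_trans hcard ?_
  apply le_csSup
  · refine ⟨Fintype.card V, ?_⟩
    rintro n ⟨t, _, ht⟩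
    rw [← ht]
    calc t.ncard ≤ (Set.univ : Set V).ncard :=
          Set.ncard_le_ncard (Set.subset_univ t) Set.finite_univ
    _ = Fintype.card V := by rw [Set.ncard_univ, Nat.card_eq_fintype_card]
  · exact ⟨L, hLind, rfl⟩
end

section
/- Let G be a bipartite graph with parts (A, B) and m edges, and suppose: at least 0.99|A| vertices of A have degree in [0.99p|B|, 1.01p|B|], at least 0.99|B| vertices of B have degree in [0.99p|A|, 1.01p|A|], m ∈ [0.99p|A||B|, 1.01p|A||B|], and |B| ≥ |A| > 10^{100}p^{−1}. Then G has a partial cover: a set of pairs (x_1,Y_1),...,(x_k,Y_k) where the x_i are distinct vertices of A, the Y_i are pairwise disjoint subsets of B, each x_i is adjacent to every vertex of Y_i, each |Y_i| = ⌈m/(3|A|)⌉, and |Y_1 ∪ ... ∪ Y_k| ≥ |B|/3. -/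
open Finset

lemma pc_image_snd {α β : Type*} [DecidableEq α] [DecidableEq β] (E : Finset (α × β)) (a : α) (U : Finset β) :
    (((E.filter fun e : α × β => e.1 = a).image Prod.snd) \ U).card
      = (E.filter fun e : α × β => e.1 = a ∧ e.2 ∉ U).card := by
  have h1 : ((E.filter fun e : α × β => e.1 = a).image Prod.snd) \ U
      = (E.filter fun e : α × β => e.1 = a ∧ e.2 ∉ U).image Prod.snd := by
    ext b
    simp only [mem_sdiff, mem_image, mem_filter]
    constructor
    · rintro ⟨⟨e, ⟨he, h1⟩, h2⟩, hb⟩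
      exact ⟨e, ⟨he, h1, h2 ▸ hb⟩, h2⟩
    · rintro ⟨e, ⟨he, h1, h2⟩, h3⟩
      exact ⟨⟨e, ⟨he, h1⟩, h3⟩, h3 ▸ h2⟩
  rw [h1, Finset.card_image_of_injOn]
  intro e he f hf hef
  simp only [coe_filter, Set.mem_setOf_eq] at he hf
  exact Prod.ext (he.2.1.trans hf.2.1.symm) hef

set_option maxHeartbeats 1000000 in
lemma pc_step {α β : Type*} [DecidableEq α] [DecidableEq β]
    (A : Finset α) (B : Finset β) (E : Finset (α × β))
    (hE : ∀ e ∈ E, e.1 ∈ A ∧ e.2 ∈ B) (p : ℝ) (hp0 : 0 < p) (hp1 : p < 1)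
    (hA : (0.99 * A.card : ℝ) ≤
      ((A.filter fun a => (0.99 * p * B.card : ℝ) ≤ ((E.filter fun e => e.1 = a).card : ℝ) ∧
        ((E.filter fun e => e.1 = a).card : ℝ) ≤ 1.01 * p * B.card).card : ℝ))
    (hB : (0.99 * B.card : ℝ) ≤
      ((B.filter fun b => (0.99 * p * A.card : ℝ) ≤ ((E.filter fun e => e.2 = b).card : ℝ) ∧
        ((E.filter fun e => e.2 = b).card : ℝ) ≤ 1.01 * p * A.card).card : ℝ))
    (hm1 : (0.99 * p * A.card * B.card : ℝ) ≤ (E.card : ℝ))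
    (hm2 : (E.card : ℝ) ≤ 1.01 * p * A.card * B.card)
    (hAB : A.card ≤ B.card) (hbig : (10 : ℝ) ^ 100 / p < (A.card : ℝ))
    (S : Finset α)
    (hS : S ⊆ A.filter fun a => (0.99 * p * B.card : ℝ) ≤ ((E.filter fun e => e.1 = a).card : ℝ) ∧
        ((E.filter fun e => e.1 = a).card : ℝ) ≤ 1.01 * p * B.card)
    (U : Finset β)
    (hUcard : (U.card : ℝ) = S.card * ⌈(E.card : ℝ) / (3 * A.card)⌉₊)
    (hUlt : (U.card : ℝ) < B.card / 3) :
    ∃ a ∈ (A.filter fun a => (0.99 * p * B.card : ℝ) ≤ ((E.filter fun e => e.1 = a).card : ℝ) ∧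
        ((E.filter fun e => e.1 = a).card : ℝ) ≤ 1.01 * p * B.card) \ S,
      ⌈(E.card : ℝ) / (3 * A.card)⌉₊ ≤ (((E.filter fun e : α × β => e.1 = a).image Prod.snd) \ U).card := by
  classical
  set GA : Finset α := A.filter fun a => (0.99 * p * B.card : ℝ) ≤ ((E.filter fun e => e.1 = a).card : ℝ) ∧
        ((E.filter fun e => e.1 = a).card : ℝ) ≤ 1.01 * p * B.card with hGA
  set D : ℕ := ⌈(E.card : ℝ) / (3 * A.card)⌉₊ with hD
  -- basic positivity
  have ha0 : (0:ℝ) < A.card := lt_trans (by positivity) hbig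
  have hb0 : (0:ℝ) < B.card := lt_of_lt_of_le ha0 (by exact_mod_cast hAB)
  have hpa : (10:ℝ)^100 < p * A.card := by
    rw [div_lt_iff₀ hp0] at hbig; linarith [hbig, mul_comm (A.card:ℝ) p]
  have hm0 : (0:ℝ) < E.card := lt_of_lt_of_le (by positivity) hm1
  -- D bounds
  have hDlow : (E.card : ℝ) / (3 * A.card) ≤ D := Nat.le_ceil _
  have hDup : (D:ℝ) < (E.card : ℝ) / (3 * A.card) + 1 :=
    Nat.ceil_lt_add_one (by positivity)
  have hD033 : 0.33 * (p * B.card) ≤ (D:ℝ) := by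
    refine le_trans ?_ hDlow
    rw [le_div_iff₀ (by positivity)]
    nlinarith
  -- the local-degree function
  by_contra hcon
  push_neg at hcon
  -- rewrite via pc_image_snd
  have hcon' : ∀ a ∈ GA \ S, ((E.filter fun e : α × β => e.1 = a ∧ e.2 ∉ U).card : ℝ) ≤ (D:ℝ) - 1 := by
    intro a ha
    have := hcon a ha
    rw [pc_image_snd] at this
    have : (E.filter fun e : α × β => e.1 = a ∧ e.2 ∉ U).card + 1 ≤ D := this
    have := (Nat.cast_le (α := ℝ)).mpr this
    push_cast at this
    linarith
  -- sum identities
  have S1 : (E.filter fun e : α × β => e.2 ∉ U).card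
      = ∑ a ∈ A, (E.filter fun e : α × β => e.1 = a ∧ e.2 ∉ U).card := by
    rw [Finset.card_eq_sum_card_fiberwise
      (f := Prod.fst) (t := A) (fun e he => (hE e (Finset.mem_filter.mp he).1).1)]
    refine Finset.sum_congr rfl fun a _ => ?_
    congr 1
    ext e
    simp only [mem_filter]
    tauto
  have S2 : (E.filter fun e : α × β => e.2 ∉ U).card
      = ∑ b ∈ B \ U, (E.filter fun e : α × β => e.2 = b).card := by
    rw [Finset.card_eq_sum_card_fiberwise (f := Prod.snd) (t := B \ U)
      (fun e he => by
        have h1 := (Finset.mem_filter.mp he)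
        exact Finset.mem_sdiff.mpr ⟨(hE e h1.1).2, h1.2⟩)]
    refine Finset.sum_congr rfl fun b hb => ?_
    have hbU := (Finset.mem_sdiff.mp hb).2
    congr 1
    ext e
    simp only [mem_filter]
    constructor
    · rintro ⟨⟨he, -⟩, h2⟩; exact ⟨he, h2⟩
    · rintro ⟨he, h2⟩; exact ⟨⟨he, fun hu => hbU (h2 ▸ hu)⟩, h2⟩

  -- bound on edges into B \ U from below
  set GB : Finset β := B.filter fun b => (0.99 * p * A.card : ℝ) ≤ ((E.filter fun e => e.2 = b).card : ℝ) ∧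
        ((E.filter fun e => e.2 = b).card : ℝ) ≤ 1.01 * p * A.card with hGB
  have B4 : ((0.99 * B.card : ℝ) - U.card) * (0.99 * p * A.card)
      ≤ ∑ b ∈ B \ U, ((E.filter fun e : α × β => e.2 = b).card : ℝ) := by
    have hsub : GB \ U ⊆ B \ U :=
      Finset.sdiff_subset_sdiff (Finset.filter_subset _ _) (le_refl U)
    have h1 : ∑ b ∈ GB \ U, ((E.filter fun e : α × β => e.2 = b).card : ℝ)
        ≤ ∑ b ∈ B \ U, ((E.filter fun e : α × β => e.2 = b).card : ℝ) :=
      Finset.sum_le_sum_of_subset_of_nonneg hsub (fun b _ _ => by positivity)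
    have h2 : ((GB \ U).card : ℝ) * (0.99 * p * A.card)
        ≤ ∑ b ∈ GB \ U, ((E.filter fun e : α × β => e.2 = b).card : ℝ) := by
      have := Finset.card_nsmul_le_sum (GB \ U)
        (fun b => ((E.filter fun e : α × β => e.2 = b).card : ℝ)) (0.99 * p * A.card)
        (fun b hb => (Finset.mem_filter.mp (Finset.mem_sdiff.mp hb).1).2.1)
      simpa [nsmul_eq_mul] using this
    have h3 : (0.99 * B.card : ℝ) - U.card ≤ ((GB \ U).card : ℝ) := by
      have h := Finset.card_le_card_sdiff_add_card (s := GB) (t := U)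
      have h' := (Nat.cast_le (α := ℝ)).mpr h
      push_cast at h'
      linarith [hB]
    have h4 := mul_le_mul_of_nonneg_right h3 (show (0:ℝ) ≤ 0.99 * p * A.card by positivity)
    linarith
  -- splits
  have hGAsub : GA ⊆ A := Finset.filter_subset _ _
  have split1 : ∑ a ∈ A \ GA, (E.filter fun e : α × β => e.1 = a ∧ e.2 ∉ U).card
      + ∑ a ∈ GA, (E.filter fun e : α × β => e.1 = a ∧ e.2 ∉ U).card
      = ∑ a ∈ A, (E.filter fun e : α × β => e.1 = a ∧ e.2 ∉ U).card :=
    Finset.sum_sdiff hGAsub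
  have split2 : ∑ a ∈ GA \ S, (E.filter fun e : α × β => e.1 = a ∧ e.2 ∉ U).card
      + ∑ a ∈ S, (E.filter fun e : α × β => e.1 = a ∧ e.2 ∉ U).card
      = ∑ a ∈ GA, (E.filter fun e : α × β => e.1 = a ∧ e.2 ∉ U).card :=
    Finset.sum_sdiff hS
  have hfd : ∀ a : α, (E.filter fun e : α × β => e.1 = a ∧ e.2 ∉ U).card
      ≤ (E.filter fun e : α × β => e.1 = a).card := fun a =>
    Finset.card_le_card (fun e he => by
      rw [Finset.mem_filter] at he ⊢; exact ⟨he.1, he.2.1⟩)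
  have degsum : ∑ a ∈ A, (E.filter fun e : α × β => e.1 = a).card = E.card :=
    (Finset.card_eq_sum_card_fiberwise (fun e he => (hE e he).1)).symm
  have splitdeg : ∑ a ∈ A \ GA, (E.filter fun e : α × β => e.1 = a).card
      + ∑ a ∈ GA, (E.filter fun e : α × β => e.1 = a).card = E.card := by
    rw [Finset.sum_sdiff hGAsub]; exact degsum
  have B2 : (0.99 * A.card : ℝ) * (0.99 * p * B.card)
      ≤ ∑ a ∈ GA, ((E.filter fun e : α × β => e.1 = a).card : ℝ) := by
    have h2 : (GA.card : ℝ) * (0.99 * p * B.card)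
        ≤ ∑ a ∈ GA, ((E.filter fun e : α × β => e.1 = a).card : ℝ) := by
      have := Finset.card_nsmul_le_sum GA
        (fun a => ((E.filter fun e : α × β => e.1 = a).card : ℝ)) (0.99 * p * B.card)
        (fun a ha => (Finset.mem_filter.mp ha).2.1)
      simpa [nsmul_eq_mul] using this
    have h4 := mul_le_mul_of_nonneg_right hA (show (0:ℝ) ≤ 0.99 * p * B.card by positivity)
    linarith
  have B3 : ∑ a ∈ S, ((E.filter fun e : α × β => e.1 = a).card : ℝ)
      ≤ (S.card : ℝ) * (1.01 * p * B.card) := by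
    have := Finset.sum_le_card_nsmul S
      (fun a => ((E.filter fun e : α × β => e.1 = a).card : ℝ)) (1.01 * p * B.card)
      (fun a ha => (Finset.mem_filter.mp (hS ha)).2.2)
    simpa [nsmul_eq_mul] using this
  have hD1 : 1 ≤ D := Nat.one_le_ceil_iff.mpr (by positivity)
  have B5 : ∑ a ∈ GA \ S, ((E.filter fun e : α × β => e.1 = a ∧ e.2 ∉ U).card : ℝ)
      ≤ (A.card : ℝ) * ((D:ℝ) - 1) := by
    have h1 : ∑ a ∈ GA \ S, ((E.filter fun e : α × β => e.1 = a ∧ e.2 ∉ U).card : ℝ)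
        ≤ ((GA \ S).card : ℝ) * ((D:ℝ) - 1) := by
      have := Finset.sum_le_card_nsmul (GA \ S)
        (fun a => ((E.filter fun e : α × β => e.1 = a ∧ e.2 ∉ U).card : ℝ)) ((D:ℝ) - 1)
        (fun a ha => hcon' a ha)
      simpa [nsmul_eq_mul] using this
    have h2 : ((GA \ S).card : ℝ) ≤ (A.card : ℝ) := by
      exact_mod_cast Finset.card_le_card ((Finset.sdiff_subset).trans hGAsub)
    have h3 : (0:ℝ) ≤ (D:ℝ) - 1 := by
      have : (1:ℝ) ≤ (D:ℝ) := by exact_mod_cast hD1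
      linarith
    nlinarith
  -- cast sums of naturals to reals
  have cast_sum : ∀ (T : Finset α) (g : α → ℕ), ((∑ a ∈ T, g a : ℕ) : ℝ) = ∑ a ∈ T, (g a : ℝ) :=
    fun T g => by push_cast; rfl
  -- chain everything in ℝ
  have C1 : ((0.99 * B.card : ℝ) - U.card) * (0.99 * p * A.card)
      ≤ ∑ a ∈ A, ((E.filter fun e : α × β => e.1 = a ∧ e.2 ∉ U).card : ℝ) := by
    calc ((0.99 * B.card : ℝ) - U.card) * (0.99 * p * A.card)
        ≤ ∑ b ∈ B \ U, ((E.filter fun e : α × β => e.2 = b).card : ℝ) := B4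
      _ = ((E.filter fun e : α × β => e.2 ∉ U).card : ℝ) := by
          rw [S2]; push_cast; rfl
      _ = ∑ a ∈ A, ((E.filter fun e : α × β => e.1 = a ∧ e.2 ∉ U).card : ℝ) := by
          rw [S1]; push_cast; rfl
  have C2 : ∑ a ∈ A \ GA, ((E.filter fun e : α × β => e.1 = a ∧ e.2 ∉ U).card : ℝ)
      ≤ (E.card : ℝ) - (0.99 * A.card : ℝ) * (0.99 * p * B.card) := by
    have h1 : ∑ a ∈ A \ GA, ((E.filter fun e : α × β => e.1 = a ∧ e.2 ∉ U).card : ℝ)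
        ≤ ∑ a ∈ A \ GA, ((E.filter fun e : α × β => e.1 = a).card : ℝ) :=
      Finset.sum_le_sum (fun a _ => by exact_mod_cast hfd a)
    have h2 : ∑ a ∈ A \ GA, ((E.filter fun e : α × β => e.1 = a).card : ℝ)
        + ∑ a ∈ GA, ((E.filter fun e : α × β => e.1 = a).card : ℝ) = (E.card : ℝ) := by
      exact_mod_cast congrArg (Nat.cast : ℕ → ℝ) splitdeg
    linarith [B2]
  have C3 : ∑ a ∈ S, ((E.filter fun e : α × β => e.1 = a ∧ e.2 ∉ U).card : ℝ)
      ≤ (S.card : ℝ) * (1.01 * p * B.card) := by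
    have h1 : ∑ a ∈ S, ((E.filter fun e : α × β => e.1 = a ∧ e.2 ∉ U).card : ℝ)
        ≤ ∑ a ∈ S, ((E.filter fun e : α × β => e.1 = a).card : ℝ) :=
      Finset.sum_le_sum (fun a _ => by exact_mod_cast hfd a)
    linarith [B3]
  have Csplit : ∑ a ∈ A \ GA, ((E.filter fun e : α × β => e.1 = a ∧ e.2 ∉ U).card : ℝ)
      + (∑ a ∈ GA \ S, ((E.filter fun e : α × β => e.1 = a ∧ e.2 ∉ U).card : ℝ)
        + ∑ a ∈ S, ((E.filter fun e : α × β => e.1 = a ∧ e.2 ∉ U).card : ℝ))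
      = ∑ a ∈ A, ((E.filter fun e : α × β => e.1 = a ∧ e.2 ∉ U).card : ℝ) := by
    have e1 := congrArg (Nat.cast : ℕ → ℝ) split1
    have e2 := congrArg (Nat.cast : ℕ → ℝ) split2
    push_cast at e1 e2
    linarith
  -- upper bound on the middle sum gives less than E.card / 3
  have hBD : (A.card : ℝ) * ((D:ℝ) - 1) < (E.card : ℝ) / 3 := by
    have h1 : (A.card : ℝ) * ((D:ℝ) - 1) < (A.card : ℝ) * ((E.card : ℝ) / (3 * A.card)) :=
      mul_lt_mul_of_pos_left (by linarith) ha0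
    have h2 : (A.card : ℝ) * ((E.card : ℝ) / (3 * A.card)) = (E.card : ℝ) / 3 := by
      field_simp
    linarith
  -- bound on S.card * p * B.card
  have hkpb : (S.card : ℝ) * (0.33 * (p * B.card)) ≤ (U.card : ℝ) := by
    rw [hUcard]
    exact mul_le_mul_of_nonneg_left hD033 (Nat.cast_nonneg _)
  -- final contradiction
  nlinarith [C1, C2, C3, Csplit, B5, hBD, hkpb, hUlt, hm2, hpa, hb0, hp0,
    mul_nonneg (show (0:ℝ) ≤ (B.card:ℝ)/3 - U.card by linarith)
      (show (0:ℝ) ≤ p * A.card by positivity),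
    mul_pos (show (0:ℝ) < p * A.card - 10^100 by linarith) hb0]

lemma pc_build {α β : Type*} [DecidableEq α] [DecidableEq β]
    (A : Finset α) (B : Finset β) (E : Finset (α × β))
    (hE : ∀ e ∈ E, e.1 ∈ A ∧ e.2 ∈ B) (p : ℝ) (hp0 : 0 < p) (hp1 : p < 1)
    (hA : (0.99 * A.card : ℝ) ≤
      ((A.filter fun a => (0.99 * p * B.card : ℝ) ≤ ((E.filter fun e => e.1 = a).card : ℝ) ∧
        ((E.filter fun e => e.1 = a).card : ℝ) ≤ 1.01 * p * B.card).card : ℝ))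
    (hB : (0.99 * B.card : ℝ) ≤
      ((B.filter fun b => (0.99 * p * A.card : ℝ) ≤ ((E.filter fun e => e.2 = b).card : ℝ) ∧
        ((E.filter fun e => e.2 = b).card : ℝ) ≤ 1.01 * p * A.card).card : ℝ))
    (hm1 : (0.99 * p * A.card * B.card : ℝ) ≤ (E.card : ℝ))
    (hm2 : (E.card : ℝ) ≤ 1.01 * p * A.card * B.card)
    (hAB : A.card ≤ B.card) (hbig : (10 : ℝ) ^ 100 / p < (A.card : ℝ)) :
    ∀ n : ℕ, ∃ (k : ℕ) (x : Fin k → α) (Y : Fin k → Finset β),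
      Function.Injective x ∧
      (∀ i, x i ∈ (A.filter fun a => (0.99 * p * B.card : ℝ) ≤ ((E.filter fun e => e.1 = a).card : ℝ) ∧
        ((E.filter fun e => e.1 = a).card : ℝ) ≤ 1.01 * p * B.card)) ∧
      (∀ i j, i ≠ j → Disjoint (Y i) (Y j)) ∧ (∀ i, Y i ⊆ B) ∧
      (∀ i, ∀ b ∈ Y i, (x i, b) ∈ E) ∧
      (∀ i, (Y i).card = ⌈(E.card : ℝ) / (3 * A.card)⌉₊) ∧
      (Finset.univ.biUnion Y).card = k * ⌈(E.card : ℝ) / (3 * A.card)⌉₊ ∧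
      (((B.card : ℝ) / 3 ≤ ((Finset.univ.biUnion Y).card : ℝ)) ∨ k = n) := by
  intro n
  induction n with
  | zero =>
    refine ⟨0, Fin.elim0, Fin.elim0, fun i => i.elim0, fun i => i.elim0,
      fun i => i.elim0, fun i => i.elim0, fun i => i.elim0, fun i => i.elim0, ?_, Or.inr rfl⟩
    simp
  | succ n ih =>
    obtain ⟨k, x, Y, hinj, hgood, hdisj, hYB, hadj, hYcard, hUcard, hlast⟩ := ih
    rcases hlast with h | rfl
    · exact ⟨k, x, Y, hinj, hgood, hdisj, hYB, hadj, hYcard, hUcard, Or.inl h⟩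
    by_cases hge : (B.card : ℝ) / 3 ≤ ((Finset.univ.biUnion Y).card : ℝ)
    · exact ⟨k, x, Y, hinj, hgood, hdisj, hYB, hadj, hYcard, hUcard, Or.inl hge⟩
    push_neg at hge
    set S : Finset α := Finset.univ.image x with hSdef
    have hScard : S.card = k := by
      rw [hSdef, Finset.card_image_of_injective _ hinj, Finset.card_univ, Fintype.card_fin]
    have hSsub : S ⊆ A.filter fun a => (0.99 * p * B.card : ℝ) ≤ ((E.filter fun e => e.1 = a).card : ℝ) ∧
        ((E.filter fun e => e.1 = a).card : ℝ) ≤ 1.01 * p * B.card := by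
      intro a ha
      obtain ⟨i, -, rfl⟩ := Finset.mem_image.mp ha
      exact hgood i
    have hUc : ((Finset.univ.biUnion Y).card : ℝ)
        = S.card * ⌈(E.card : ℝ) / (3 * A.card)⌉₊ := by
      rw [hUcard, hScard]; push_cast; ring
    obtain ⟨a, ha, hDle⟩ := pc_step A B E hE p hp0 hp1 hA hB hm1 hm2 hAB hbig S hSsub
      (Finset.univ.biUnion Y) hUc hge
    have haGA := (Finset.mem_sdiff.mp ha).1
    have haS := (Finset.mem_sdiff.mp ha).2
    obtain ⟨Ynew, hYnewsub, hYnewcard⟩ := Finset.exists_subset_card_eq hDle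
    have key : ∀ j : Fin k, Disjoint Ynew (Y j) := fun j =>
      Finset.disjoint_left.mpr fun b hb hbj =>
        (Finset.mem_sdiff.mp (hYnewsub hb)).2
          (Finset.mem_biUnion.mpr ⟨j, Finset.mem_univ j, hbj⟩)
    have hNa : ∀ b ∈ Ynew, (a, b) ∈ E := by
      intro b hb
      have hmem := (Finset.mem_sdiff.mp (hYnewsub hb)).1
      obtain ⟨e, he, hb2⟩ := Finset.mem_image.mp hmem
      have he' := Finset.mem_filter.mp he
      have heq : e = (a, b) := Prod.ext he'.2 hb2
      exact heq ▸ he'.1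
    have hNaB : Ynew ⊆ B := fun b hb => (hE (a, b) (hNa b hb)).2
    refine ⟨k + 1, Fin.cons a x, Fin.cons Ynew Y, ?_, ?_, ?_, ?_, ?_, ?_, ?_, Or.inr rfl⟩
    · -- injectivity
      refine fun i j => ?_
      cases i using Fin.cases with
      | zero =>
        cases j using Fin.cases with
        | zero => intro _; rfl
        | succ j =>
          simp only [Fin.cons_zero, Fin.cons_succ]
          intro h
          exact absurd (Finset.mem_image.mpr ⟨j, Finset.mem_univ j, h.symm⟩) haS
      | succ i =>
        cases j using Fin.cases with
        | zero =>
          simp only [Fin.cons_zero, Fin.cons_succ]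
          intro h
          exact absurd (Finset.mem_image.mpr ⟨i, Finset.mem_univ i, h⟩) haS
        | succ j =>
          simp only [Fin.cons_succ]
          intro h
          exact congrArg Fin.succ (hinj h)
    · -- goodness
      intro i
      cases i using Fin.cases with
      | zero => simpa using haGA
      | succ i => simpa using hgood i
    · -- disjointness
      intro i j
      cases i using Fin.cases with
      | zero =>
        cases j using Fin.cases with
        | zero => intro h; exact absurd rfl h
        | succ j => intro _; simpa using key j
      | succ i =>
        cases j using Fin.cases with
        | zero => intro _; simpa using (key i).symm
        | succ j =>
          intro h
          have : i ≠ j := fun hq => h (by rw [hq])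
          simpa using hdisj i j this
    · -- subsets of B
      intro i
      cases i using Fin.cases with
      | zero => simpa using hNaB
      | succ i => simpa using hYB i
    · -- adjacency
      intro i
      cases i using Fin.cases with
      | zero => simpa using hNa
      | succ i => simpa using hadj i
    · -- sizes
      intro i
      cases i using Fin.cases with
      | zero => simpa using hYnewcard
      | succ i => simpa using hYcard i
    · -- cover size
      have hbu : Finset.univ.biUnion (Fin.cons Ynew Y)
          = Ynew ∪ Finset.univ.biUnion Y := by
        ext b
        simp [Finset.mem_biUnion, Fin.exists_fin_succ]
      rw [hbu, Finset.card_union_of_disjoint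
        ((Finset.disjoint_biUnion_right _ _ _).mpr fun j _ => key j)]
      rw [hYnewcard, hUcard]
      ring


/-- Deterministic partial cover lemma for bipartite graphs: if most degrees on both sides
and the edge count are close to their expected values, then `G` has a partial cover. -/
theorem partial_cover_of_regular {α β : Type*} [DecidableEq α] [DecidableEq β]
    (A : Finset α) (B : Finset β) (E : Finset (α × β))
    (hE : ∀ e ∈ E, e.1 ∈ A ∧ e.2 ∈ B) (p : ℝ) (hp0 : 0 < p) (hp1 : p < 1)
    (hA : (0.99 * A.card : ℝ) ≤
      ((A.filter fun a => (0.99 * p * B.card : ℝ) ≤ ((E.filter fun e => e.1 = a).card : ℝ) ∧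
        ((E.filter fun e => e.1 = a).card : ℝ) ≤ 1.01 * p * B.card).card : ℝ))
    (hB : (0.99 * B.card : ℝ) ≤
      ((B.filter fun b => (0.99 * p * A.card : ℝ) ≤ ((E.filter fun e => e.2 = b).card : ℝ) ∧
        ((E.filter fun e => e.2 = b).card : ℝ) ≤ 1.01 * p * A.card).card : ℝ))
    (hm1 : (0.99 * p * A.card * B.card : ℝ) ≤ (E.card : ℝ))
    (hm2 : (E.card : ℝ) ≤ 1.01 * p * A.card * B.card)
    (hAB : A.card ≤ B.card) (hbig : (10 : ℝ) ^ 100 / p < (A.card : ℝ)) :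
    ∃ (k : ℕ) (x : Fin k → α) (Y : Fin k → Finset β),
      Function.Injective x ∧ (∀ i, x i ∈ A) ∧
      (∀ i j, i ≠ j → Disjoint (Y i) (Y j)) ∧ (∀ i, Y i ⊆ B) ∧
      (∀ i, ∀ b ∈ Y i, (x i, b) ∈ E) ∧
      (∀ i, (Y i).card = ⌈(E.card : ℝ) / (3 * A.card)⌉₊) ∧
      ((B.card : ℝ) / 3 ≤ ((Finset.univ.biUnion Y).card : ℝ)) := by
  obtain ⟨k, x, Y, hinj, hgood, hdisj, hYB, hadj, hYcard, hUcard, hlast⟩ :=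
    pc_build A B E hE p hp0 hp1 hA hB hm1 hm2 hAB hbig B.card
  refine ⟨k, x, Y, hinj, fun i => Finset.filter_subset _ _ (hgood i),
    hdisj, hYB, hadj, hYcard, ?_⟩
  rcases hlast with h | rfl
  · exact h
  · have ha0 : (0:ℝ) < A.card := lt_trans (by positivity) hbig
    have hb0 : (0:ℝ) < B.card := lt_of_lt_of_le ha0 (by exact_mod_cast hAB)
    have hm0 : (0:ℝ) < E.card := by nlinarith [mul_pos (mul_pos hp0 ha0) hb0]
    have hD1 : 1 ≤ ⌈(E.card : ℝ) / (3 * A.card)⌉₊ :=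
      Nat.one_le_ceil_iff.mpr (div_pos hm0 (by linarith))
    rw [hUcard]
    push_cast
    have h2 : (1:ℝ) ≤ (⌈(E.card : ℝ) / (3 * A.card)⌉₊ : ℝ) := by exact_mod_cast hD1
    nlinarith [hb0]
end

section
/- Let G be a random bipartite graph with parts (A, B), each possible edge present independently with probability p. If |B| ≥ |A| > 10^{100}·p^{−1}, then with probability at least 1 − e^{−c·p|A||B|} for some absolute constant c > 0, the number of edges e(A,B) lies in [0.99p|A||B|, 1.01p|A||B|] and G has a partial cover. -/
open MeasureTheory

/-- Number of edges of a sampled bipartite graph on `Fin a × Fin b`. -/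
def numEdges {a b : ℕ} (ω : Fin a × Fin b → Bool) : ℕ :=
  (Finset.univ.filter fun e : Fin a × Fin b => ω e = true).card

/-- A partial cover of a sampled bipartite graph: distinct vertices `x i` of `A = Fin a`,
pairwise disjoint sets `Y i ⊆ B = Fin b` of neighbors of `x i`, each of size `⌈d/3⌉`
where `d = e(A,B)/|A|` is the average degree in `A`, covering at least a third of `B`. -/
def HasPartialCover {a b : ℕ} (ω : Fin a × Fin b → Bool) : Prop :=
  ∃ (k : ℕ) (x : Fin k → Fin a) (Y : Fin k → Finset (Fin b)),
    Function.Injective x ∧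
    (∀ i j, i ≠ j → Disjoint (Y i) (Y j)) ∧
    (∀ i, ∀ v ∈ Y i, ω (x i, v) = true) ∧
    (∀ i, (Y i).card = ⌈(numEdges ω : ℝ) / (3 * a)⌉₊) ∧
    ((b : ℝ) / 3 ≤ ((Finset.univ.biUnion Y).card : ℝ))

open Finset

namespace RBPC
variable {a b : ℕ}

def W (q : ℝ) (ω : Fin a × Fin b → Bool) : ℝ := ∏ e, if ω e then q else 1 - q
def Pr (q : ℝ) (S : Finset (Fin a × Fin b → Bool)) : ℝ := ∑ ω ∈ S, W q ω
def cnt (R : Finset (Fin a × Fin b)) (ω : Fin a × Fin b → Bool) : ℕ :=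
  (R.filter fun e => ω e = true).card

lemma W_nonneg {q : ℝ} (hq0 : 0 ≤ q) (hq1 : q ≤ 1) (ω : Fin a × Fin b → Bool) :
    0 ≤ W q ω := by
  refine Finset.prod_nonneg fun e _ => ?_
  split <;> linarith

lemma cnt_cast (R : Finset (Fin a × Fin b)) (ω : Fin a × Fin b → Bool) :
    (cnt R ω : ℝ) = ∑ e : Fin a × Fin b, (if e ∈ R ∧ ω e = true then (1:ℝ) else 0) := by
  rw [cnt]
  have : R.filter (fun e => ω e = true) = univ.filter (fun e => e ∈ R ∧ ω e = true) := by
    ext e; simp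
  rw [this, Finset.card_filter]
  push_cast
  rfl

lemma mgf {q : ℝ} (R : Finset (Fin a × Fin b)) (t : ℝ) :
    ∑ ω : Fin a × Fin b → Bool, W q ω * Real.exp (t * (cnt R ω : ℝ)) =
      (1 - q + q * Real.exp t) ^ R.card := by
  classical
  have h1 : ∀ ω : Fin a × Fin b → Bool, W q ω * Real.exp (t * (cnt R ω : ℝ)) =
      ∏ e : Fin a × Fin b,
        ((if ω e then q else 1 - q) * (if e ∈ R ∧ ω e = true then Real.exp t else 1)) := by
    intro ω
    rw [Finset.prod_mul_distrib, W, cnt_cast, Finset.mul_sum, Real.exp_sum]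
    congr 1
    refine Finset.prod_congr rfl fun e _ => ?_
    split
    · simp
    · simp
  simp_rw [h1]
  have h2 := Finset.prod_univ_sum (fun _ : Fin a × Fin b => (univ : Finset Bool))
    (fun e x => (if x = true then q else 1 - q) * (if e ∈ R ∧ x = true then Real.exp t else 1))
  rw [Fintype.piFinset_univ] at h2
  rw [← h2]
  have h3 : ∀ e : Fin a × Fin b,
      (∑ x : Bool, (if x = true then q else 1 - q) * (if e ∈ R ∧ x = true then Real.exp t else 1))
        = if e ∈ R then 1 - q + q * Real.exp t else 1 := by
    intro e
    rw [Fintype.sum_bool]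
    by_cases h : e ∈ R <;> simp [h] <;> ring
  simp_rw [h3]
  rw [Finset.prod_ite_mem, Finset.univ_inter, Finset.prod_const]

lemma chernoff {q : ℝ} (hq0 : 0 ≤ q) (hq1 : q ≤ 1) (R : Finset (Fin a × Fin b)) (t m : ℝ)
    (E : (Fin a × Fin b → Bool) → Prop) [DecidablePred E]
    (hE : ∀ ω, E ω → t * m ≤ t * (cnt R ω : ℝ)) :
    Pr q (univ.filter E) ≤ Real.exp (-(t * m) + (R.card : ℝ) * (q * (Real.exp t - 1))) := by
  have step1 : Pr q (univ.filter E) ≤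
      ∑ ω : Fin a × Fin b → Bool, W q ω * Real.exp (t * (cnt R ω : ℝ) - t * m) := by
    rw [Pr]
    refine le_trans (Finset.sum_le_sum fun ω hω => ?_)
      (Finset.sum_le_sum_of_subset_of_nonneg (Finset.filter_subset _ _) fun ω _ _ =>
        mul_nonneg (W_nonneg hq0 hq1 ω) (Real.exp_nonneg _))
    have hωE : E ω := (Finset.mem_filter.mp hω).2
    calc W q ω = W q ω * 1 := (mul_one _).symm
      _ ≤ _ := by
          refine mul_le_mul_of_nonneg_left ?_ (W_nonneg hq0 hq1 ω)
          rw [Real.one_le_exp_iff]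
          linarith [hE ω hωE]
  have step2 : ∑ ω : Fin a × Fin b → Bool, W q ω * Real.exp (t * (cnt R ω : ℝ) - t * m) =
      Real.exp (-(t * m)) * (1 - q + q * Real.exp t) ^ R.card := by
    rw [← mgf R t, Finset.mul_sum]
    refine Finset.sum_congr rfl fun ω _ => ?_
    rw [Real.exp_sub, Real.exp_neg]
    field_simp
  have hbase0 : 0 ≤ 1 - q + q * Real.exp t := by
    have := mul_nonneg hq0 (Real.exp_nonneg t); linarith
  have step3 : (1 - q + q * Real.exp t) ^ R.card ≤
      Real.exp (q * (Real.exp t - 1)) ^ R.card := by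
    refine pow_le_pow_left₀ hbase0 ?_ _
    have := Real.add_one_le_exp (q * (Real.exp t - 1))
    linarith
  calc Pr q (univ.filter E) ≤ _ := step1
    _ = _ := step2
    _ ≤ Real.exp (-(t * m)) * Real.exp (q * (Real.exp t - 1)) ^ R.card :=
        mul_le_mul_of_nonneg_left step3 (Real.exp_nonneg _)
    _ = _ := by rw [← Real.exp_nat_mul, ← Real.exp_add]

/-- exp upper bound by a cubic polynomial for |x| ≤ 1 -/
lemma exp_cubic {x : ℝ} (hx : |x| ≤ 1) : Real.exp x ≤ 1 + x + x ^ 2 / 2 + |x| ^ 3 := by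
  have h := Real.exp_bound hx (n := 3) (by norm_num)
  have h2 : ∑ m ∈ Finset.range 3, x ^ m / m.factorial = 1 + x + x ^ 2 / 2 := by
    norm_num [Finset.sum_range_succ, Nat.factorial]
  rw [h2] at h
  have h3 : |x| ^ 3 * ((3:ℕ).succ / ((3:ℕ).factorial * 3)) ≤ |x| ^ 3 := by
    have : (0:ℝ) ≤ |x| ^ 3 := by positivity
    have h4 : ((3:ℕ).succ : ℝ) / ((3:ℕ).factorial * 3) ≤ 1 := by norm_num [Nat.factorial]
    nlinarith
  have := abs_le.mp h
  linarith [this.2]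

lemma Pr_nonneg {q : ℝ} (hq0 : 0 ≤ q) (hq1 : q ≤ 1) (S : Finset (Fin a × Fin b → Bool)) :
    0 ≤ Pr q S := Finset.sum_nonneg fun ω _ => W_nonneg hq0 hq1 ω

lemma Pr_mono {q : ℝ} (hq0 : 0 ≤ q) (hq1 : q ≤ 1) {S T : Finset (Fin a × Fin b → Bool)}
    (h : S ⊆ T) : Pr q S ≤ Pr q T :=
  Finset.sum_le_sum_of_subset_of_nonneg h fun ω _ _ => W_nonneg hq0 hq1 ω

lemma measure_singleton (p : ENNReal) (hp : p ≤ 1) (ω : Fin a × Fin b → Bool) :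
    (Measure.pi fun _ : Fin a × Fin b => (PMF.bernoulli p.toNNReal (by simpa using ENNReal.toNNReal_mono ENNReal.one_ne_top hp)).toMeasure) {ω} =
      ∏ e : Fin a × Fin b, (if ω e then p else 1 - p) := by
  have h1 : ({ω} : Set (Fin a × Fin b → Bool)) = Set.pi Set.univ (fun e => {ω e}) := by
    ext f; simp [funext_iff, Set.mem_pi]
  rw [h1, Measure.pi_pi]
  refine Finset.prod_congr rfl fun e _ => ?_
  rw [PMF.toMeasure_apply_singleton _ _ (measurableSet_singleton _)]
  erw [PMF.bernoulli_apply]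
  have hpt : p ≠ ⊤ := ne_top_of_le_ne_top ENNReal.one_ne_top hp
  cases ω e <;> simp [hpt, ENNReal.coe_sub]

lemma measure_finset (p : ENNReal) (hp : p ≤ 1) (S : Finset (Fin a × Fin b → Bool)) :
    ((Measure.pi fun _ : Fin a × Fin b => (PMF.bernoulli p.toNNReal (by simpa using ENNReal.toNNReal_mono ENNReal.one_ne_top hp)).toMeasure) ↑S).toReal =
      Pr p.toReal S := by
  classical
  have hcov : (↑S : Set (Fin a × Fin b → Bool)) = ⋃ ω ∈ S, {ω} := by
    ext f; simp
  rw [hcov, measure_biUnion_finset ?_ (fun ω _ => (Set.finite_singleton ω).measurableSet)]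
  · rw [ENNReal.toReal_sum]
    · refine Finset.sum_congr rfl fun ω _ => ?_
      rw [measure_singleton p hp, ENNReal.toReal_prod]
      refine Finset.prod_congr rfl fun e _ => ?_
      split
      · rfl
      · rw [ENNReal.toReal_sub_of_le hp ENNReal.one_ne_top, ENNReal.toReal_one]
    · intro ω _
      rw [measure_singleton p hp]
      exact ENNReal.prod_ne_top fun e _ => by
        split
        · exact (lt_of_le_of_lt hp ENNReal.one_lt_top).ne
        · exact (lt_of_le_of_lt tsub_le_self ENNReal.one_lt_top).ne
  · intro x _ y _ hxy
    simp [Function.onFun, Set.disjoint_singleton, hxy]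



lemma Pr_univ {q : ℝ} : Pr q (univ : Finset (Fin a × Fin b → Bool)) = 1 := by
  have h := mgf (a := a) (b := b) (q := q) ∅ 0
  simpa [Pr, cnt] using h

lemma Pr_compl {q : ℝ} (S : Finset (Fin a × Fin b → Bool)) :
    Pr q S = 1 - Pr q Sᶜ := by
  have h : Pr q S + Pr q Sᶜ = 1 := by
    rw [Pr, Pr, Finset.sum_add_sum_compl]; exact Pr_univ
  linarith

lemma Pr_union_le {q : ℝ} (hq0 : 0 ≤ q) (hq1 : q ≤ 1)
    (S T : Finset (Fin a × Fin b → Bool)) : Pr q (S ∪ T) ≤ Pr q S + Pr q T := by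
  classical
  have h1 : S ∪ T = S ∪ (T \ S) := by rw [Finset.union_sdiff_self_eq_union]
  rw [h1, Pr, Finset.sum_union Finset.disjoint_sdiff]
  exact add_le_add le_rfl (Pr_mono hq0 hq1 (Finset.sdiff_subset))

lemma Pr_biUnion_le {q : ℝ} (hq0 : 0 ≤ q) (hq1 : q ≤ 1) {ι : Type*} [DecidableEq ι]
    (I : Finset ι) (f : ι → Finset (Fin a × Fin b → Bool)) :
    Pr q (I.biUnion f) ≤ ∑ i ∈ I, Pr q (f i) := by
  classical
  induction I using Finset.induction with
  | empty => simp [Pr]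
  | insert _ _ hx ih =>
      rename_i x I'
      rw [Finset.biUnion_insert, Finset.sum_insert hx]
      exact le_trans (Pr_union_le hq0 hq1 _ _) (by linarith)


lemma card_univ_prod : (univ : Finset (Fin a × Fin b)).card = a * b := by
  simp

lemma tail_lower {q : ℝ} (hq0 : 0 ≤ q) (hq1 : q ≤ 1) :
    Pr q (univ.filter fun ω : Fin a × Fin b → Bool =>
        ¬ (0.99 * q * a * b ≤ (cnt univ ω : ℝ))) ≤
      Real.exp (-(0.00004 * (q * a * b))) := by
  have h := chernoff (a := a) (b := b) hq0 hq1 univ (-0.01) (0.99 * q * a * b)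
    (fun ω => ¬ (0.99 * q * a * b ≤ (cnt univ ω : ℝ)))
    (fun ω hω => by push_neg at hω; nlinarith)
  refine le_trans h ?_
  rw [card_univ_prod]
  apply Real.exp_le_exp.mpr
  have hc := exp_cubic (x := (-0.01 : ℝ)) (by rw [abs_le]; norm_num)
  have habq : (0:ℝ) ≤ q * a * b := by positivity
  have : |(-0.01 : ℝ)| = 0.01 := by norm_num
  rw [this] at hc
  have hab : ((a * b : ℕ) : ℝ) = (a : ℝ) * b := by push_cast; ring
  rw [hab]
  nlinarith

lemma tail_upper {q : ℝ} (hq0 : 0 ≤ q) (hq1 : q ≤ 1) :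
    Pr q (univ.filter fun ω : Fin a × Fin b → Bool =>
        ¬ ((cnt univ ω : ℝ) ≤ 1.01 * q * a * b)) ≤
      Real.exp (-(0.00004 * (q * a * b))) := by
  have h := chernoff (a := a) (b := b) hq0 hq1 univ (0.01) (1.01 * q * a * b)
    (fun ω => ¬ ((cnt univ ω : ℝ) ≤ 1.01 * q * a * b))
    (fun ω hω => by push_neg at hω; nlinarith)
  refine le_trans h ?_
  rw [card_univ_prod]
  apply Real.exp_le_exp.mpr
  have hc := exp_cubic (x := (0.01 : ℝ)) (by rw [abs_le]; norm_num)
  have habq : (0:ℝ) ≤ q * a * b := by positivity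
  have : |(0.01 : ℝ)| = 0.01 := by norm_num
  rw [this] at hc
  have hab : ((a * b : ℕ) : ℝ) = (a : ℝ) * b := by push_cast; ring
  rw [hab]
  nlinarith

lemma tail_rect {q : ℝ} (hq0 : 0 ≤ q) (hq1 : q ≤ 1)
    (T : Finset (Fin a)) (S : Finset (Fin b)) (P : Prop) [Decidable P] :
    Pr q (univ.filter fun ω : Fin a × Fin b → Bool =>
        P ∧ (cnt (T ×ˢ S) ω : ℝ) < 0.9 * q * T.card * S.card) ≤
      Real.exp (-(0.004 * (q * T.card * S.card))) := by
  have h := chernoff (a := a) (b := b) hq0 hq1 (T ×ˢ S) (-0.1)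
    (0.9 * q * T.card * S.card)
    (fun ω => P ∧ (cnt (T ×ˢ S) ω : ℝ) < 0.9 * q * T.card * S.card)
    (fun ω hω => by nlinarith [hω.2])
  refine le_trans h ?_
  rw [Finset.card_product]
  apply Real.exp_le_exp.mpr
  have hc := exp_cubic (x := (-0.1 : ℝ)) (by rw [abs_le]; norm_num)
  have habq : (0:ℝ) ≤ q * T.card * S.card := by positivity
  have : |(-0.1 : ℝ)| = 0.1 := by norm_num
  rw [this] at hc
  have hab : ((T.card * S.card : ℕ) : ℝ) = (T.card : ℝ) * S.card := by push_cast; ring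
  rw [hab]
  nlinarith


lemma cnt_prod {ω : Fin a × Fin b → Bool} (T : Finset (Fin a)) (S : Finset (Fin b)) :
    cnt (T ×ˢ S) ω = ∑ x ∈ T, (S.filter fun v => ω (x, v) = true).card := by
  rw [cnt, Finset.card_filter, Finset.sum_product]
  exact Finset.sum_congr rfl fun x _ => (Finset.card_filter _ _).symm

set_option maxHeartbeats 2000000 in
lemma det {q : ℝ} {ω : Fin a × Fin b → Bool} (hq1 : q ≤ 1) (hab : a ≤ b)
    (hbig : (10:ℝ)^100 < a * q)
    (hE1a : 0.99 * q * a * b ≤ (cnt univ ω : ℝ))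
    (hE2 : ∀ T : Finset (Fin a), ∀ S : Finset (Fin b), a ≤ 2 * T.card → 2 * b ≤ 3 * S.card →
        0.9 * q * T.card * S.card ≤ (cnt (T ×ˢ S) ω : ℝ))
    (hE1b : (cnt univ ω : ℝ) ≤ 1.01 * q * a * b) :
    HasPartialCover ω := by
  classical
  set eN := cnt (univ : Finset (Fin a × Fin b)) ω with heN
  set s := ⌈(eN : ℝ) / (3 * a)⌉₊ with hs
  have h10 : (0:ℝ) < 10^100 := by positivity
  have haq : (0:ℝ) < a * q := lt_trans h10 hbig
  have ha0 : (0:ℝ) < a := by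
    rcases (Nat.cast_nonneg a : (0:ℝ) ≤ a).lt_or_eq with h | h
    · exact h
    · rw [← h] at haq; simp at haq
  have hq0 : (0:ℝ) < q := by nlinarith
  have haR : (10:ℝ)^100 < a := by nlinarith
  have hbR : (a:ℝ) ≤ b := Nat.cast_le.mpr hab
  have hqb : (10:ℝ)^100 < q * b := by nlinarith
  have hb0 : (0:ℝ) < b := by nlinarith
  have heNpos : (0:ℝ) < eN := by nlinarith
  have hsl : 0.33 * q * (b:ℝ) ≤ (s : ℝ) := by
    refine le_trans ?_ (Nat.le_ceil _)
    rw [le_div_iff₀ (by positivity : (0:ℝ) < 3 * a)]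
    nlinarith
  have hsu : (s : ℝ) ≤ 0.34 * q * b := by
    have h1 : (s:ℝ) < (eN : ℝ)/(3*a) + 1 := Nat.ceil_lt_add_one (by positivity)
    have h2 : (eN:ℝ)/(3*a) ≤ 1.01 * q * b / 3 := by
      rw [div_le_div_iff₀ (by positivity) (by norm_num)]
      nlinarith
    nlinarith
  have hs1 : 1 ≤ s := Nat.ceil_pos.mpr (by positivity)
  -- the pivot step
  have step : ∀ A' : Finset (Fin a), ∀ C : Finset (Fin b), a ≤ 2 * A'.card →
      3 * C.card < b →
      ∃ x ∈ A', ∃ Y : Finset (Fin b), Y ⊆ univ \ C ∧ Y.card = s ∧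
        ∀ v ∈ Y, ω (x, v) = true := by
    intro A' C hA' hC
    set U : Finset (Fin b) := univ \ C with hU
    have hUcard : U.card = b - C.card := by
      rw [hU, Finset.card_sdiff_of_subset (Finset.subset_univ C), Finset.card_univ, Fintype.card_fin]
    have hCb : C.card ≤ b := by
      have := Finset.card_le_univ C; simpa using this
    have hUy : 2 * b ≤ 3 * U.card := by omega
    have h2 := hE2 A' U hA' hUy
    by_contra hno
    push_neg at hno
    have hdeg : ∀ x ∈ A', ((U.filter fun v => ω (x, v) = true)).card < s := by
      intro x hx
      by_contra hge
      push_neg at hge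
      obtain ⟨Y, hYsub, hYcard⟩ := Finset.exists_subset_card_eq hge
      obtain ⟨v, hvY, hvbad⟩ := hno x hx Y (hYsub.trans (Finset.filter_subset _ _)) hYcard
      exact hvbad ((Finset.mem_filter.mp (hYsub hvY)).2)
    have hsumlt : (cnt (A' ×ˢ U) ω : ℝ) ≤ (A'.card : ℝ) * ((s:ℝ) - 1) := by
      rw [cnt_prod]
      push_cast
      calc (∑ x ∈ A', (((U.filter fun v => ω (x, v) = true)).card : ℝ))
          ≤ ∑ _x ∈ A', ((s : ℝ) - 1) := by
            refine Finset.sum_le_sum fun x hx => ?_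
            have h := hdeg x hx
            have h' : (((U.filter fun v => ω (x, v) = true)).card : ℝ) + 1 ≤ s := by
              exact_mod_cast h
            linarith
        _ = (A'.card : ℝ) * ((s:ℝ) - 1) := by
            rw [Finset.sum_const, nsmul_eq_mul]
    have haN : 0 < a := Nat.cast_pos.mp ha0
    have hA'0 : (0:ℝ) < A'.card := by
      have : 0 < A'.card := by omega
      exact_mod_cast this
    have hUR : 2 * (b:ℝ) ≤ 3 * U.card := by exact_mod_cast hUy
    have h9 : 0.6 * (q * b) ≤ 0.9 * q * U.card := by
      nlinarith [mul_le_mul_of_nonneg_left hUR (le_of_lt hq0)]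
    have hkey : (s:ℝ) - 1 < 0.9 * q * U.card := by linarith
    have hmul := mul_lt_mul_of_pos_left hkey hA'0
    nlinarith
  -- greedy construction
  have greedy : ∀ n : ℕ, ∀ A' : Finset (Fin a), ∀ C : Finset (Fin b),
      b ≤ 3 * C.card + n → s * (a - A'.card) ≤ C.card →
      ∃ L : List (Fin a × Finset (Fin b)),
        (L.map Prod.fst).Nodup ∧
        (∀ pr ∈ L, pr.1 ∈ A') ∧
        L.Pairwise (fun pr qr => Disjoint pr.2 qr.2) ∧
        (∀ pr ∈ L, pr.2 ⊆ univ \ C) ∧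
        (∀ pr ∈ L, ∀ v ∈ pr.2, ω (pr.1, v) = true) ∧
        (∀ pr ∈ L, pr.2.card = s) ∧
        b ≤ 3 * (C.card + s * L.length) := by
    intro n
    induction n with
    | zero =>
        intro A' C hfuel hinv
        exact ⟨[], by simp, by simp, by simp, by simp, by simp, by simp, by simpa using hfuel⟩
    | succ n ih =>
        intro A' C hfuel hinv
        by_cases hC : b ≤ 3 * C.card
        · exact ⟨[], by simp, by simp, by simp, by simp, by simp, by simp, by
            simpa using hC⟩
        · push_neg at hC
          have hA'le : A'.card ≤ a := by
            have := Finset.card_le_univ A'; simpa using this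
          have hused : (s:ℝ) * ((a - A'.card : ℕ) : ℝ) ≤ C.card := by exact_mod_cast hinv
          have hCbR : 3 * (C.card:ℝ) < b := by exact_mod_cast hC
          have hA' : a ≤ 2 * A'.card := by
            by_contra hcon
            push_neg at hcon
            have h1 : (a:ℝ) ≤ 2 * ((a - A'.card : ℕ) : ℝ) := by
              have : a ≤ 2*(a - A'.card) := by omega
              exact_mod_cast this
            nlinarith
          obtain ⟨x, hx, Y, hYsub, hYcard, hYedge⟩ := step A' C hA' hC
          have hYC : Disjoint Y C := by
            rw [Finset.disjoint_left]
            intro v hv hvC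
            exact (Finset.mem_sdiff.mp (hYsub hv)).2 hvC
          have hCY : (C ∪ Y).card = C.card + s := by
            rw [Finset.card_union_of_disjoint hYC.symm, hYcard]
          have hinv' : s * (a - (A'.erase x).card) ≤ (C ∪ Y).card := by
            have hce : (A'.erase x).card = A'.card - 1 := Finset.card_erase_of_mem hx
            have hxpos : 1 ≤ A'.card := Finset.card_pos.mpr ⟨x, hx⟩
            have heq : s * (a - (A'.erase x).card) = s * (a - A'.card) + s := by
              rw [hce]
              have h1 : a - (A'.card - 1) = (a - A'.card) + 1 := by omega
              rw [h1, Nat.mul_succ]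
            rw [heq, hCY]
            exact Nat.add_le_add hinv le_rfl
          obtain ⟨L', hnd, hmem, hpw, hsub, hedge, hcards, hfin⟩ :=
            ih (A'.erase x) (C ∪ Y) (by omega) hinv'
          refine ⟨(x, Y) :: L', ?_, ?_, ?_, ?_, ?_, ?_, ?_⟩
          · rw [List.map_cons, List.nodup_cons]
            refine ⟨?_, hnd⟩
            intro hmem'
            obtain ⟨pr, hpr, hfst⟩ := List.mem_map.mp hmem'
            have h := hmem pr hpr
            rw [hfst] at h
            exact (Finset.mem_erase.mp h).1 rfl
          · intro pr hpr
            rcases List.mem_cons.mp hpr with h | h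
            · rw [h]; exact hx
            · exact Finset.mem_of_mem_erase (hmem pr h)
          · refine List.pairwise_cons.mpr ⟨?_, hpw⟩
            intro pr hpr
            rw [Finset.disjoint_left]
            intro v hvY hvpr
            have := hsub pr hpr hvpr
            exact (Finset.mem_sdiff.mp this).2 (Finset.mem_union_right C hvY)
          · intro pr hpr
            rcases List.mem_cons.mp hpr with h | h
            · rw [h]; exact hYsub
            · exact (hsub pr h).trans
                (Finset.sdiff_subset_sdiff le_rfl Finset.subset_union_left)
          · intro pr hpr
            rcases List.mem_cons.mp hpr with h | h
            · rw [h]; exact hYedge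
            · exact hedge pr h
          · intro pr hpr
            rcases List.mem_cons.mp hpr with h | h
            · rw [h]; exact hYcard
            · exact hcards pr h
          · have h7 : (C ∪ Y).card + s * L'.length = C.card + s * (L'.length + 1) := by
              rw [hCY, Nat.mul_succ]; ring
            rw [List.length_cons]
            calc b ≤ 3 * ((C ∪ Y).card + s * L'.length) := hfin
              _ = 3 * (C.card + s * (L'.length + 1)) := by rw [h7]
  obtain ⟨L, hnd, hmem, hpw, hsub, hedge, hcards, hfin⟩ :=
    greedy b univ ∅ (by simp) (by simp)
  have hpw' : L.Pairwise (fun pr qr => pr.1 ≠ qr.1) := List.pairwise_map.mp hnd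
  have hxinj : Function.Injective fun i : Fin L.length => (L.get i).1 := by
    intro i j hij
    rcases lt_trichotomy i j with h | h | h
    · exact absurd hij (List.pairwise_iff_get.mp hpw' i j h)
    · exact h
    · exact absurd hij.symm (List.pairwise_iff_get.mp hpw' j i h)
  have hdisj : ∀ i j : Fin L.length, i ≠ j → Disjoint (L.get i).2 (L.get j).2 := by
    intro i j hij
    rcases lt_trichotomy i j with h | h | h
    · exact List.pairwise_iff_get.mp hpw i j h
    · exact absurd h hij
    · exact (List.pairwise_iff_get.mp hpw j i h).symm
  refine ⟨L.length, fun i => (L.get i).1, fun i => (L.get i).2, hxinj, hdisj, ?_, ?_, ?_⟩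
  · exact fun i v hv => hedge (L.get i) (L.get_mem i) v hv
  · intro i
    exact hcards (L.get i) (L.get_mem i)
  · have hcard : (Finset.univ.biUnion fun i : Fin L.length => (L.get i).2).card =
        L.length * s := by
      rw [Finset.card_biUnion (fun i _ j _ hij => hdisj i j hij)]
      have : ∀ i : Fin L.length, ((L.get i).2).card = s := fun i =>
        hcards (L.get i) (L.get_mem i)
      simp only [List.get_eq_getElem] at this
      simp [this, Finset.card_univ]
    rw [hcard]
    have hb3 : b ≤ 3 * (s * L.length) := by simpa using hfin
    have : (b:ℝ) ≤ 3 * (s * L.length) := by exact_mod_cast hb3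
    push_cast at this ⊢
    linarith


/-- the good event predicate -/
def goodPred (a b : ℕ) (q : ℝ) (ω : Fin a × Fin b → Bool) : Prop :=
  (0.99 * q * a * b ≤ (cnt univ ω : ℝ) ∧ (cnt univ ω : ℝ) ≤ 1.01 * q * a * b) ∧
  (∀ T : Finset (Fin a), ∀ S : Finset (Fin b), a ≤ 2 * T.card → 2 * b ≤ 3 * S.card →
      0.9 * q * T.card * S.card ≤ (cnt (T ×ˢ S) ω : ℝ))

lemma bad3_bound {q : ℝ} (hq0 : 0 ≤ q) (hq1 : q ≤ 1) (hbR : (a:ℝ) ≤ (b:ℝ))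
    (hQb : (10:ℝ)^100 * (b:ℝ) ≤ q * a * b) (hQ0 : (0:ℝ) ≤ q * a * b) :
    Pr q (((univ : Finset (Finset (Fin a) × Finset (Fin b)))).biUnion (fun TS =>
        univ.filter fun ω => (a ≤ 2 * TS.1.card ∧ 2 * b ≤ 3 * TS.2.card) ∧
          (cnt (TS.1 ×ˢ TS.2) ω : ℝ) < 0.9 * q * TS.1.card * TS.2.card))
      ≤ Real.exp (-(0.00004 * (q * (a:ℝ) * b))) := by
  refine le_trans (Pr_biUnion_le hq0 hq1 _ _) ?_
  have hterm : ∀ TS : Finset (Fin a) × Finset (Fin b),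
      Pr q (univ.filter fun ω => (a ≤ 2 * TS.1.card ∧ 2 * b ≤ 3 * TS.2.card) ∧
        (cnt (TS.1 ×ˢ TS.2) ω : ℝ) < 0.9 * q * TS.1.card * TS.2.card) ≤
        Real.exp (-(0.001 * (q * a * b))) := by
    rintro ⟨T, S⟩
    by_cases hcond : a ≤ 2 * T.card ∧ 2 * b ≤ 3 * S.card
    · refine le_trans (tail_rect hq0 hq1 T S _) ?_
      apply Real.exp_le_exp.mpr
      have hTc : (a:ℝ) ≤ 2 * T.card := by exact_mod_cast hcond.1
      have hSc : 2 * (b:ℝ) ≤ 3 * S.card := by exact_mod_cast hcond.2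
      have hTnn : (0:ℝ) ≤ (T.card:ℝ) := Nat.cast_nonneg _
      have hSnn : (0:ℝ) ≤ (S.card:ℝ) := Nat.cast_nonneg _
      have hann : (0:ℝ) ≤ (a:ℝ) := Nat.cast_nonneg _
      have hbnn : (0:ℝ) ≤ (b:ℝ) := Nat.cast_nonneg _
      have hprod : (a:ℝ) * (2 * b) ≤ (2 * T.card) * (3 * S.card) :=
        mul_le_mul hTc hSc (by positivity) (by positivity)
      nlinarith [mul_le_mul_of_nonneg_left hprod hq0]
    · have hemp : (univ.filter fun ω : Fin a × Fin b → Bool =>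
          (a ≤ 2 * T.card ∧ 2 * b ≤ 3 * S.card) ∧
          (cnt (T ×ˢ S) ω : ℝ) < 0.9 * q * T.card * S.card) = ∅ := by
        refine Finset.filter_eq_empty_iff.mpr fun ω _ => ?_
        exact fun hcon => hcond hcon.1
      rw [hemp]
      exact le_trans (le_of_eq (by simp [Pr])) (Real.exp_nonneg _)
  refine le_trans (Finset.sum_le_sum fun TS _ => hterm TS) ?_
  rw [Finset.sum_const, nsmul_eq_mul]
  have hcard : ((univ : Finset (Finset (Fin a) × Finset (Fin b))).card : ℝ)
      = 2^a * 2^b := by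
    rw [Finset.card_univ, Fintype.card_prod, Fintype.card_finset, Fintype.card_finset,
      Fintype.card_fin, Fintype.card_fin]
    push_cast
    ring
  rw [hcard]
  have hbnn : (0:ℝ) ≤ (b:ℝ) := Nat.cast_nonneg _
  have hpow : (2:ℝ)^a * 2^b ≤ Real.exp (0.0001 * (q * a * b)) := by
    have h2e : (2:ℝ)^a * 2^b = Real.exp (((a:ℝ) + b) * Real.log 2) := by
      rw [add_mul, Real.exp_add]
      congr 1 <;> rw [← Real.exp_log (by norm_num : (0:ℝ) < 2), ← Real.exp_nat_mul] <;>
        rw [Real.exp_log (by norm_num : (0:ℝ) < 2)]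
    rw [h2e]
    apply Real.exp_le_exp.mpr
    have hlog := Real.log_two_lt_d9
    nlinarith [Real.log_nonneg (by norm_num : (1:ℝ) ≤ 2)]
  calc (2^a * 2^b : ℝ) * Real.exp (-(0.001 * (q * a * b)))
      ≤ Real.exp (0.0001 * (q * a * b)) * Real.exp (-(0.001 * (q * a * b))) :=
        mul_le_mul_of_nonneg_right hpow (Real.exp_nonneg _)
    _ = Real.exp (0.0001 * (q * a * b) + -(0.001 * (q * a * b))) := (Real.exp_add _ _).symm
    _ ≤ Real.exp (-(0.00004 * (q * (a:ℝ) * b))) := Real.exp_le_exp.mpr (by nlinarith)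

lemma good_bound {q : ℝ} (hq0 : 0 ≤ q) (hq1 : q ≤ 1) (hbR : (a:ℝ) ≤ (b:ℝ))
    (hQb : (10:ℝ)^100 * (b:ℝ) ≤ q * a * b) (hQ200 : (10:ℝ)^200 ≤ q * a * b)
    (hQ0 : (0:ℝ) ≤ q * a * b)
    [instG : DecidablePred (goodPred a b q)] :
    1 - Real.exp (-(1/100000 * q * (a:ℝ) * b)) ≤ Pr q (univ.filter (goodPred a b q)) := by
  classical
  rw [Pr_compl]
  have key : Pr q (univ.filter (goodPred a b q))ᶜ ≤ Real.exp (-(1/100000 * q * (a:ℝ) * b)) := by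
    set bad1 : Finset (Fin a × Fin b → Bool) :=
      univ.filter (fun ω => ¬ (0.99 * q * a * b ≤ (cnt univ ω : ℝ))) with hbad1
    set bad2 : Finset (Fin a × Fin b → Bool) :=
      univ.filter (fun ω => ¬ ((cnt univ ω : ℝ) ≤ 1.01 * q * a * b)) with hbad2
    set bad3 : Finset (Fin a × Fin b → Bool) :=
      ((univ : Finset (Finset (Fin a) × Finset (Fin b)))).biUnion (fun TS =>
        univ.filter fun ω => (a ≤ 2 * TS.1.card ∧ 2 * b ≤ 3 * TS.2.card) ∧
          (cnt (TS.1 ×ˢ TS.2) ω : ℝ) < 0.9 * q * TS.1.card * TS.2.card) with hbad3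
    have hcover : (univ.filter (goodPred a b q))ᶜ ⊆ (bad1 ∪ bad2) ∪ bad3 := by
      intro ω hω
      rw [Finset.mem_compl, Finset.mem_filter] at hω
      push_neg at hω
      have hω' := hω (Finset.mem_univ ω)
      by_cases hA : 0.99 * q * a * b ≤ (cnt univ ω : ℝ)
      · by_cases hB : (cnt univ ω : ℝ) ≤ 1.01 * q * a * b
        · have h2 : ¬ (∀ T : Finset (Fin a), ∀ S : Finset (Fin b), a ≤ 2 * T.card →
              2 * b ≤ 3 * S.card → 0.9 * q * T.card * S.card ≤ (cnt (T ×ˢ S) ω : ℝ)) := by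
            intro hall
            exact hω' ⟨⟨hA, hB⟩, hall⟩
          push_neg at h2
          obtain ⟨T, S, hT, hS, hlt⟩ := h2
          refine Finset.mem_union_right _ ?_
          rw [hbad3, Finset.mem_biUnion]
          exact ⟨(T, S), Finset.mem_univ _, Finset.mem_filter.mpr
            ⟨Finset.mem_univ _, ⟨hT, hS⟩, hlt⟩⟩
        · exact Finset.mem_union_left _ (Finset.mem_union_right _
            (Finset.mem_filter.mpr ⟨Finset.mem_univ _, hB⟩))
      · exact Finset.mem_union_left _ (Finset.mem_union_left _
          (Finset.mem_filter.mpr ⟨Finset.mem_univ _, hA⟩))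
    have h1 : Pr q bad1 ≤ Real.exp (-(0.00004 * (q * a * b))) := tail_lower hq0 hq1
    have h2 : Pr q bad2 ≤ Real.exp (-(0.00004 * (q * a * b))) := tail_upper hq0 hq1
    have h3 : Pr q bad3 ≤ Real.exp (-(0.00004 * (q * (a:ℝ) * b))) :=
      bad3_bound hq0 hq1 hbR hQb hQ0
    have hunion : Pr q (univ.filter (goodPred a b q))ᶜ ≤ Pr q bad1 + Pr q bad2 + Pr q bad3 :=
      le_trans (Pr_mono hq0 hq1 hcover)
        (le_trans (Pr_union_le hq0 hq1 _ _)
          (add_le_add (Pr_union_le hq0 hq1 _ _) le_rfl))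
    have hthree : (3:ℝ) ≤ Real.exp (0.00003 * (q * a * b)) := by
      have := Real.add_one_le_exp (0.00003 * (q * a * b))
      nlinarith
    calc Pr q (univ.filter (goodPred a b q))ᶜ
        ≤ Real.exp (-(0.00004 * (q * a * b))) + Real.exp (-(0.00004 * (q * a * b)))
          + Real.exp (-(0.00004 * (q * a * b))) := by
          refine le_trans hunion ?_
          gcongr <;> simp [mul_assoc]
      _ = 3 * Real.exp (-(0.00004 * (q * a * b))) := by ring
      _ ≤ Real.exp (0.00003 * (q * a * b)) * Real.exp (-(0.00004 * (q * a * b))) :=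
          mul_le_mul_of_nonneg_right hthree (Real.exp_nonneg _)
      _ = Real.exp (0.00003 * (q * a * b) + -(0.00004 * (q * a * b))) := (Real.exp_add _ _).symm
      _ = Real.exp (-(1/100000 * q * (a:ℝ) * b)) := by ring_nf
  linarith

end RBPC

open RBPC in
/-- Random bipartite lemma: if `|B| ≥ |A| > 10^100 p⁻¹`, then with probability at least
`1 - e^{-c p |A||B|}` (for an absolute constant `c > 0`) the random bipartite graph has
`e(A,B) ∈ [0.99 p|A||B|, 1.01 p|A||B|]` and a partial cover. -/
theorem random_bipartite_partial_cover :
    ∃ c : ℝ, 0 < c ∧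
      ∀ (a b : ℕ) (p : ENNReal) (hp : p ≤ 1), a ≤ b →
        (10 : ℝ) ^ 100 < (a : ℝ) * p.toReal →
        (1 : ℝ) - Real.exp (-(c * p.toReal * a * b)) ≤
          ((Measure.pi fun _ : Fin a × Fin b => (PMF.bernoulli p.toNNReal (by simpa using ENNReal.toNNReal_mono ENNReal.one_ne_top hp)).toMeasure)
            {ω | (0.99 * p.toReal * a * b ≤ (numEdges ω : ℝ) ∧
                  (numEdges ω : ℝ) ≤ 1.01 * p.toReal * a * b) ∧
                 HasPartialCover ω}).toReal := by
  classical
  refine ⟨1/100000, by norm_num, ?_⟩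
  intro a b p hp hab hbig
  set q : ℝ := p.toReal with hqdef
  have hq0 : 0 ≤ q := ENNReal.toReal_nonneg
  have hq1 : q ≤ 1 := by
    have := ENNReal.toReal_mono (by simp : (1:ENNReal) ≠ ⊤) hp
    simpa using this
  have h10 : (0:ℝ) < 10^100 := by positivity
  have haq : (0:ℝ) < a * q := lt_trans h10 hbig
  have ha0 : (0:ℝ) < a := by
    rcases (Nat.cast_nonneg a : (0:ℝ) ≤ a).lt_or_eq with h | h
    · exact h
    · rw [← h] at haq; simp at haq
  have hqpos : (0:ℝ) < q := by nlinarith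
  have haR : (10:ℝ)^100 < a := by nlinarith
  have hbR : (a:ℝ) ≤ b := Nat.cast_le.mpr hab
  have hb0 : (0:ℝ) < b := by nlinarith
  have hQb : (10:ℝ)^100 * b ≤ q * a * b := by nlinarith
  have hQ200 : (10:ℝ)^200 ≤ q * a * b := by nlinarith
  have hQ0 : (0:ℝ) ≤ q * a * b := by positivity
  set G : Finset (Fin a × Fin b → Bool) := univ.filter (goodPred a b q) with hG
  set μ := (Measure.pi fun _ : Fin a × Fin b => (PMF.bernoulli p.toNNReal (by simpa using ENNReal.toNNReal_mono ENNReal.one_ne_top hp)).toMeasure) with hμ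
  have hsubset : (↑G : Set (Fin a × Fin b → Bool)) ⊆
      {ω | (0.99 * p.toReal * a * b ≤ (numEdges ω : ℝ) ∧
            (numEdges ω : ℝ) ≤ 1.01 * p.toReal * a * b) ∧ HasPartialCover ω} := by
    intro ω hω
    rw [Finset.mem_coe, hG, Finset.mem_filter] at hω
    obtain ⟨-, ⟨h1a, h1b⟩, h2⟩ := hω
    have hne : numEdges ω = cnt univ ω := rfl
    refine ⟨⟨by rw [hne]; exact h1a, by rw [hne]; exact h1b⟩, ?_⟩
    exact det hq1 hab hbig h1a h2 h1b
  have hmono : (μ ↑G).toReal ≤ (μ _).toReal :=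
    ENNReal.toReal_mono (measure_ne_top μ _) (measure_mono hsubset)
  refine le_trans ?_ hmono
  rw [measure_finset p hp G]
  exact good_bound hq0 hq1 hbR hQb hQ200 hQ0
end
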